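/- arXiv:1903.10199 — 12 statements merged into one kernel-verified Lean document; each statement's English description precedes it below -/
import Mathlib

section
/- Suppose the outcome regression model is correctly specified: μ[Y | σ(A,L)] = ψ₀·A + m∘L almost everywhere, where ψ₀ ∈ ℝ and m : E → ℝ is measurable with m∘L integrable. Then for every bounded measurable π : E → ℝ, the identity-link doubly robust score has mean zero: ∫ (A − π(L))·(Y − ψ₀·A − m(L)) dμ = 0. -/
open MeasureTheory

/-- If the outcome regression model is correctly specified,
`μ[Y | σ(A,L)] = ψ₀·A + m∘L` a.e., then for every bounded measurable `π : E → ℝ`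
the identity-link doubly robust score has mean zero. -/
theorem dr_score_mean_zero_outcome_model
    {Ω E : Type*} [MeasurableSpace Ω] [MeasurableSpace E]
    (μ : Measure Ω) [IsProbabilityMeasure μ]
    (L : Ω → E) (A Y : Ω → ℝ)
    (hL : Measurable L) (hA : Measurable A)
    (hA01 : ∀ ω, A ω = 0 ∨ A ω = 1)
    (hY : Integrable Y μ)
    (ψ₀ : ℝ) (m : E → ℝ) (hm : Measurable m)
    (hmL : Integrable (fun ω => m (L ω)) μ)
    (hmodel : μ[Y | MeasurableSpace.comap (fun ω => (A ω, L ω)) inferInstance]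
      =ᵐ[μ] fun ω => ψ₀ * A ω + m (L ω)) :
    ∀ π : E → ℝ, Measurable π → (∃ C, ∀ x, |π x| ≤ C) →
      ∫ ω, (A ω - π (L ω)) * (Y ω - ψ₀ * A ω - m (L ω)) ∂μ = 0 := by
  rintro π hπ ⟨C, hC⟩
  set mG := MeasurableSpace.comap (fun ω => (A ω, L ω)) inferInstance with hmGdef
  have hmG : mG ≤ _ := (hA.prodMk hL).comap_le
  -- the pair map is mG-measurable
  have hφ : @Measurable Ω (ℝ × E) mG _ (fun ω => (A ω, L ω)) :=
    MeasurableSpace.le_map_comap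
  have hAmG : @Measurable Ω ℝ mG _ A := measurable_fst.comp hφ
  have hLmG : @Measurable Ω E mG _ L := measurable_snd.comp hφ
  -- integrability of A
  have hAint : Integrable A μ := by
    refine (integrable_const (1 : ℝ)).mono' hA.aestronglyMeasurable ?_
    filter_upwards with ω
    rcases hA01 ω with h | h <;> simp [h]
  -- g is mG-strongly measurable and bounded
  set g : Ω → ℝ := fun ω => A ω - π (L ω) with hgdef
  have hgSM : StronglyMeasurable[mG] g :=
    (hAmG.sub (hπ.comp hLmG)).stronglyMeasurable
  have hgbd : ∀ ω, ‖g ω‖ ≤ 1 + C := by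
    intro ω
    have h1 : |A ω| ≤ 1 := by rcases hA01 ω with h | h <;> simp [h]
    calc ‖g ω‖ ≤ |A ω| + |π (L ω)| := abs_sub _ _
    _ ≤ 1 + C := add_le_add h1 (hC _)
  -- Z and its integrability
  set Z : Ω → ℝ := fun ω => Y ω - ψ₀ * A ω - m (L ω) with hZdef
  have hZint : Integrable Z μ := (hY.sub (hAint.const_mul ψ₀)).sub hmL
  have hgZint : Integrable (fun ω => g ω * Z ω) μ :=
    hZint.bdd_mul ((hgSM.mono hmG).aestronglyMeasurable) (Filter.Eventually.of_forall hgbd)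
  -- conditional expectation of Z is 0
  have hW : StronglyMeasurable[mG] (fun ω => ψ₀ * A ω + m (L ω)) :=
    ((hAmG.const_mul ψ₀).add (hm.comp hLmG)).stronglyMeasurable
  have hWint : Integrable (fun ω => ψ₀ * A ω + m (L ω)) μ :=
    (hAint.const_mul ψ₀).add hmL
  have hZce : μ[Z | mG] =ᵐ[μ] 0 := by
    have h1 : μ[Z | mG] =ᵐ[μ]
        μ[Y | mG] - μ[(fun ω => ψ₀ * A ω + m (L ω)) | mG] := by
      have : Z = Y - fun ω => ψ₀ * A ω + m (L ω) := by
        funext ω; simp [hZdef, sub_sub]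
      rw [this]
      exact condExp_sub hY hWint _
    have h2 : μ[(fun ω => ψ₀ * A ω + m (L ω)) | mG]
        =ᵐ[μ] fun ω => ψ₀ * A ω + m (L ω) :=
      Filter.EventuallyEq.of_eq (condExp_of_stronglyMeasurable hmG hW hWint)
    filter_upwards [h1, h2, hmodel] with ω e1 e2 e3
    simp only [Pi.sub_apply, Pi.zero_apply] at *
    rw [e1, e2, e3]
    ring
  -- pull out g
  have hmul : μ[(fun ω => g ω * Z ω) | mG] =ᵐ[μ] fun ω => g ω * (μ[Z | mG]) ω :=
    condExp_mul_of_stronglyMeasurable_left hgSM hgZint hZint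
  have hzero : μ[(fun ω => g ω * Z ω) | mG] =ᵐ[μ] 0 := by
    filter_upwards [hmul, hZce] with ω e1 e2
    simp [e1, e2]
  calc ∫ ω, (A ω - π (L ω)) * (Y ω - ψ₀ * A ω - m (L ω)) ∂μ
      = ∫ ω, (μ[(fun ω => g ω * Z ω) | mG]) ω ∂μ := (integral_condExp hmG).symm
    _ = ∫ ω, (0 : Ω → ℝ) ω ∂μ := integral_congr_ae hzero
    _ = 0 := by simp
end

section
/- Suppose the semiparametric model holds: μ[Y | σ(A,L)] = ψ₀·A + b∘L almost everywhere for some ψ₀ ∈ ℝ and some measurable b : E → ℝ with b∘L integrable, and the propensity score model is correctly specified: μ[A | σ(L)] = π∘L almost everywhere for a bounded measurable π : E → ℝ. Then for every measurable m : E → ℝ with m∘L integrable, the identity-link doubly robust score has mean zero: ∫ (A − π(L))·(Y − ψ₀·A − m(L)) dμ = 0. -/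
open MeasureTheory

/-- Auxiliary abstract lemma: if `w` is `mG`-measurable and bounded, `μ[g|mG] = f` a.e.
with `f` `mH`-measurable and integrable, and `μ[w|mH] = 0` a.e., then `∫ w·g = 0`. -/
theorem dr_aux {Ω : Type*} {m0 : MeasurableSpace Ω}
    (μ : Measure Ω) [IsProbabilityMeasure μ]
    (mG mH : MeasurableSpace Ω) (hGle : mG ≤ m0) (hHle : mH ≤ m0)
    (w g f : Ω → ℝ) (D : ℝ)
    (hw_G : StronglyMeasurable[mG] w) (hwbd : ∀ ω, ‖w ω‖ ≤ D)
    (hwint : Integrable w μ) (hgint : Integrable g μ)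
    (hf_H : StronglyMeasurable[mH] f) (hfint : Integrable f μ)
    (hcondg : μ[g | mG] =ᵐ[μ] f)
    (hcondw : μ[w | mH] =ᵐ[μ] (0 : Ω → ℝ)) :
    ∫ ω, w ω * g ω ∂μ = 0 := by
  have hUint : Integrable (fun ω => w ω * g ω) μ :=
    hgint.bdd_mul (hw_G.mono hGle).aestronglyMeasurable (Filter.Eventually.of_forall hwbd)
  have hVint : Integrable (fun ω => f ω * w ω) μ :=
    ((hfint.bdd_mul (hw_G.mono hGle).aestronglyMeasurable
      (Filter.Eventually.of_forall hwbd)).congr (by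
        filter_upwards with ω using mul_comm _ _))
  have hstep1 : μ[(fun ω => w ω * g ω) | mG] =ᵐ[μ] fun ω => w ω * f ω := by
    calc μ[(fun ω => w ω * g ω) | mG]
        =ᵐ[μ] w * μ[g | mG] := condExp_mul_of_stronglyMeasurable_left hw_G hUint hgint
      _ =ᵐ[μ] fun ω => w ω * f ω := by
          filter_upwards [hcondg] with ω h
          simp [h]
  have hstep2 : μ[(fun ω => f ω * w ω) | mH] =ᵐ[μ] (0 : Ω → ℝ) := by
    calc μ[(fun ω => f ω * w ω) | mH]
        =ᵐ[μ] f * μ[w | mH] := condExp_mul_of_stronglyMeasurable_left hf_H hVint hwint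
      _ =ᵐ[μ] (0 : Ω → ℝ) := by
          filter_upwards [hcondw] with ω h
          simp [h]
  calc ∫ ω, w ω * g ω ∂μ
      = ∫ ω, (μ[(fun ω => w ω * g ω) | mG]) ω ∂μ := (integral_condExp hGle).symm
    _ = ∫ ω, w ω * f ω ∂μ := integral_congr_ae hstep1
    _ = ∫ ω, f ω * w ω ∂μ := by congr 1; funext ω; ring
    _ = ∫ ω, (μ[(fun ω => f ω * w ω) | mH]) ω ∂μ := (integral_condExp hHle).symm
    _ = ∫ ω, (0 : ℝ) ∂μ := integral_congr_ae hstep2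
    _ = 0 := integral_zero _ _

/-- Under the semiparametric model `μ[Y | σ(A,L)] = ψ₀·A + b∘L` a.e.
and a correctly specified propensity score `μ[A | σ(L)] = π∘L` a.e. (π bounded
measurable), the identity-link doubly robust score has mean zero for every
measurable `m : E → ℝ` with `m∘L` integrable. -/
theorem dr_score_mean_zero_propensity_model
    {Ω E : Type*} [MeasurableSpace Ω] [MeasurableSpace E]
    (μ : Measure Ω) [IsProbabilityMeasure μ]
    (L : Ω → E) (A Y : Ω → ℝ)
    (hL : Measurable L) (hA : Measurable A)
    (hA01 : ∀ ω, A ω = 0 ∨ A ω = 1)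
    (hY : Integrable Y μ)
    (ψ₀ : ℝ) (b : E → ℝ) (hb : Measurable b)
    (hbL : Integrable (fun ω => b (L ω)) μ)
    (hmodel : μ[Y | MeasurableSpace.comap (fun ω => (A ω, L ω)) inferInstance]
      =ᵐ[μ] fun ω => ψ₀ * A ω + b (L ω))
    (π : E → ℝ) (hπ : Measurable π) (hπbdd : ∃ C, ∀ x, |π x| ≤ C)
    (hps : μ[A | MeasurableSpace.comap L inferInstance] =ᵐ[μ] fun ω => π (L ω)) :
    ∀ m : E → ℝ, Measurable m → Integrable (fun ω => m (L ω)) μ →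
      ∫ ω, (A ω - π (L ω)) * (Y ω - ψ₀ * A ω - m (L ω)) ∂μ = 0 := by
  intro m hm hmL
  obtain ⟨C, hC⟩ := hπbdd
  have hGle : MeasurableSpace.comap (fun ω => (A ω, L ω))
      (inferInstance : MeasurableSpace (ℝ × E)) ≤ ‹MeasurableSpace Ω› :=
    (hA.prodMk hL).comap_le
  have hHle : MeasurableSpace.comap L (inferInstance : MeasurableSpace E)
      ≤ ‹MeasurableSpace Ω› := hL.comap_le
  have hpair_G : Measurable[MeasurableSpace.comap (fun ω => (A ω, L ω)) inferInstance]
      (fun ω => (A ω, L ω)) := comap_measurable _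
  have hA_G : Measurable[MeasurableSpace.comap (fun ω => (A ω, L ω)) inferInstance] A :=
    measurable_fst.comp hpair_G
  have hL_G : Measurable[MeasurableSpace.comap (fun ω => (A ω, L ω)) inferInstance] L :=
    measurable_snd.comp hpair_G
  have hL_H : Measurable[MeasurableSpace.comap L inferInstance] L := comap_measurable _
  have hAbd : ∀ ω, ‖A ω‖ ≤ 1 := by
    intro ω; rcases hA01 ω with h | h <;> simp [h]
  have hAint : Integrable A μ :=
    (integrable_const (1 : ℝ)).mono' hA.aestronglyMeasurable (Filter.Eventually.of_forall hAbd)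
  have hπLint : Integrable (fun ω => π (L ω)) μ :=
    (integrable_const C).mono' (hπ.comp hL).aestronglyMeasurable
      (Filter.Eventually.of_forall fun ω => hC (L ω))
  have hwbd : ∀ ω, ‖A ω - π (L ω)‖ ≤ 1 + C := by
    intro ω
    calc ‖A ω - π (L ω)‖ ≤ ‖A ω‖ + ‖π (L ω)‖ := norm_sub_le _ _
    _ ≤ 1 + C := add_le_add (hAbd ω) (hC (L ω))
  have hwint : Integrable (fun ω => A ω - π (L ω)) μ := hAint.sub hπLint
  have hgint : Integrable (fun ω => Y ω - ψ₀ * A ω - m (L ω)) μ :=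
    (hY.sub (hAint.const_mul ψ₀)).sub hmL
  have hfint : Integrable (fun ω => b (L ω) - m (L ω)) μ := hbL.sub hmL
  have hG2int : Integrable (fun ω => ψ₀ * A ω + m (L ω)) μ := (hAint.const_mul ψ₀).add hmL
  have hG2meas : StronglyMeasurable[MeasurableSpace.comap (fun ω => (A ω, L ω)) inferInstance]
      (fun ω => ψ₀ * A ω + m (L ω)) :=
    ((hA_G.const_mul ψ₀).add ((hm.comp hL_G))).stronglyMeasurable
  have hcondg : μ[(fun ω => Y ω - ψ₀ * A ω - m (L ω)) |
      MeasurableSpace.comap (fun ω => (A ω, L ω)) inferInstance]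
      =ᵐ[μ] fun ω => b (L ω) - m (L ω) := by
    have heq : (fun ω => Y ω - ψ₀ * A ω - m (L ω))
        = Y - fun ω => ψ₀ * A ω + m (L ω) := by
      funext ω; simp [sub_sub]
    rw [heq]
    calc μ[(Y - fun ω => ψ₀ * A ω + m (L ω)) |
          MeasurableSpace.comap (fun ω => (A ω, L ω)) inferInstance]
        =ᵐ[μ] μ[Y | MeasurableSpace.comap (fun ω => (A ω, L ω)) inferInstance]
          - μ[(fun ω => ψ₀ * A ω + m (L ω)) |
              MeasurableSpace.comap (fun ω => (A ω, L ω)) inferInstance] :=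
          condExp_sub hY hG2int _
      _ =ᵐ[μ] fun ω => b (L ω) - m (L ω) := by
          rw [condExp_of_stronglyMeasurable hGle hG2meas hG2int]
          filter_upwards [hmodel] with ω h1
          simp only [Pi.sub_apply, h1]
          ring
  have hπL_H : StronglyMeasurable[MeasurableSpace.comap L inferInstance]
      (fun ω => π (L ω)) := (hπ.comp hL_H).stronglyMeasurable
  have hcondw : μ[(fun ω => A ω - π (L ω)) | MeasurableSpace.comap L inferInstance]
      =ᵐ[μ] (0 : Ω → ℝ) := by
    have heq : (fun ω => A ω - π (L ω)) = A - fun ω => π (L ω) := rfl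
    rw [heq]
    calc μ[(A - fun ω => π (L ω)) | MeasurableSpace.comap L inferInstance]
        =ᵐ[μ] μ[A | MeasurableSpace.comap L inferInstance]
          - μ[(fun ω => π (L ω)) | MeasurableSpace.comap L inferInstance] :=
          condExp_sub hAint hπLint _
      _ =ᵐ[μ] (0 : Ω → ℝ) := by
          rw [condExp_of_stronglyMeasurable hHle hπL_H hπLint]
          filter_upwards [hps] with ω h1
          simp [h1]
  exact dr_aux μ _ _ hGle hHle
    (fun ω => A ω - π (L ω)) (fun ω => Y ω - ψ₀ * A ω - m (L ω))
    (fun ω => b (L ω) - m (L ω)) (1 + C)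
    (hA_G.sub (hπ.comp hL_G)).stronglyMeasurable hwbd hwint hgint
    ((hb.comp hL_H).sub (hm.comp hL_H)).stronglyMeasurable hfint hcondg hcondw
end

section
/- Suppose the multiplicative outcome regression model is correctly specified: μ[Y | σ(A,L)] = exp(ψ₀·A)·(m∘L) almost everywhere, where ψ₀ ∈ ℝ and m : E → ℝ is measurable with m∘L integrable. Then for every bounded measurable π : E → ℝ, the log-link doubly robust score has mean zero: ∫ (A − π(L))·(Y·exp(−ψ₀·A) − m(L)) dμ = 0. -/
open MeasureTheory

/-- If the multiplicative outcome regression model is correctly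
specified, `μ[Y | σ(A,L)] = exp(ψ₀·A)·(m∘L)` a.e., then for every bounded
measurable `π : E → ℝ` the log-link doubly robust score has mean zero. -/
theorem dr_score_mean_zero_outcome_model_log_link
    {Ω E : Type*} [MeasurableSpace Ω] [MeasurableSpace E]
    (μ : Measure Ω) [IsProbabilityMeasure μ]
    (L : Ω → E) (A Y : Ω → ℝ)
    (hL : Measurable L) (hA : Measurable A)
    (hA01 : ∀ ω, A ω = 0 ∨ A ω = 1)
    (hY : Integrable Y μ)
    (ψ₀ : ℝ) (m : E → ℝ) (hm : Measurable m)
    (hmL : Integrable (fun ω => m (L ω)) μ)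
    (hmodel : μ[Y | MeasurableSpace.comap (fun ω => (A ω, L ω)) inferInstance]
      =ᵐ[μ] fun ω => Real.exp (ψ₀ * A ω) * m (L ω)) :
    ∀ π : E → ℝ, Measurable π → (∃ C, ∀ x, |π x| ≤ C) →
      ∫ ω, (A ω - π (L ω)) * (Y ω * Real.exp (-(ψ₀ * A ω)) - m (L ω)) ∂μ = 0 := by
  intro π hπ ⟨C, hC⟩
  have h𝒢 : MeasurableSpace.comap (fun ω => (A ω, L ω)) inferInstance ≤ ‹MeasurableSpace Ω› :=
    (hA.prodMk hL).comap_le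
  set 𝒢 := MeasurableSpace.comap (fun ω => (A ω, L ω)) inferInstance with h𝒢def
  -- the multiplier g
  set g : Ω → ℝ := fun ω => (A ω - π (L ω)) * Real.exp (-(ψ₀ * A ω)) with hgdef
  have hpair : Measurable[𝒢] (fun ω => (A ω, L ω)) :=
    Measurable.of_comap_le le_rfl
  have hgm : Measurable[𝒢] g := by
    have hf : Measurable (fun p : ℝ × E => (p.1 - π p.2) * Real.exp (-(ψ₀ * p.1))) := by
      fun_prop
    exact hf.comp hpair
  have hgsm : StronglyMeasurable[𝒢] g := hgm.stronglyMeasurable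
  -- bound on g
  have hgbdd : ∀ ω, |g ω| ≤ (1 + C) * Real.exp |ψ₀| := by
    intro ω
    have hA1 : |A ω| ≤ 1 := by rcases hA01 ω with h | h <;> simp [h]
    have h1 : |A ω - π (L ω)| ≤ 1 + C :=
      (abs_sub _ _).trans (add_le_add hA1 (hC _))
    have h2 : |Real.exp (-(ψ₀ * A ω))| ≤ Real.exp |ψ₀| := by
      rw [abs_of_pos (Real.exp_pos _)]
      apply Real.exp_le_exp.2
      calc -(ψ₀ * A ω) ≤ |ψ₀ * A ω| := neg_le_abs _
        _ = |ψ₀| * |A ω| := abs_mul _ _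
        _ ≤ |ψ₀| * 1 := by exact mul_le_mul_of_nonneg_left hA1 (abs_nonneg _)
        _ = |ψ₀| := mul_one _
    calc |g ω| = |A ω - π (L ω)| * |Real.exp (-(ψ₀ * A ω))| := abs_mul _ _
      _ ≤ (1 + C) * Real.exp |ψ₀| := by
          apply mul_le_mul h1 h2 (abs_nonneg _)
          have := (abs_nonneg (A 
            ω - π (L ω))).trans h1
          linarith
  have hgaesm := (hgsm.mono h𝒢).aestronglyMeasurable (μ := μ)
  -- integrability of g * Y
  have hgY : Integrable (g * Y) μ := by
    refine Integrable.bdd_mul hY hgaesm (c := (1 + C) * Real.exp |ψ₀|) (Filter.Eventually.of_forall ?_)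
    intro ω; simpa [Real.norm_eq_abs] using hgbdd ω
  -- integrability of (A - π∘L) * m∘L
  have h2int : Integrable (fun ω => (A ω - π (L ω)) * m (L ω)) μ := by
    refine Integrable.bdd_mul hmL ?_ (c := 1 + C) (Filter.Eventually.of_forall ?_)
    · exact ((hA.sub (hπ.comp hL))).aestronglyMeasurable
    · intro ω
      have hA1 : |A ω| ≤ 1 := by rcases hA01 ω with h | h <;> simp [h]
      simpa [Real.norm_eq_abs] using (abs_sub _ _).trans (add_le_add hA1 (hC _))
  -- key identity: ∫ g·Y = ∫ g·μ[Y|𝒢] = ∫ (A - π∘L)·m∘L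
  have hkey : ∫ ω, g ω * Y ω ∂μ = ∫ ω, (A ω - π (L ω)) * m (L ω) ∂μ := by
    have h1 : μ[g * Y | 𝒢] =ᵐ[μ] g * μ[Y | 𝒢] :=
      condExp_mul_of_stronglyMeasurable_left hgsm hgY hY
    have h2 : ∫ ω, g ω * Y ω ∂μ = ∫ ω, (g * μ[Y | 𝒢]) ω ∂μ := by
      rw [← integral_condExp h𝒢]
      exact integral_congr_ae h1
    rw [h2]
    refine integral_congr_ae ?_
    filter_upwards [hmodel] with ω hω
    simp only [Pi.mul_apply, hω, hgdef]
    have hexp : Real.exp (-(ψ₀ * A ω)) * Real.exp (ψ₀ * A ω) = 1 := by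
      rw [← Real.exp_add, neg_add_cancel, Real.exp_zero]
    linear_combination (A ω - π (L ω)) * m (L ω) * hexp
  -- conclude
  have hsplit : ∀ ω, (A ω - π (L ω)) * (Y ω * Real.exp (-(ψ₀ * A ω)) - m (L ω)) =
      g ω * Y ω - (A ω - π (L ω)) * m (L ω) := by
    intro ω; simp only [hgdef]; ring
  calc ∫ ω, (A ω - π (L ω)) * (Y ω * Real.exp (-(ψ₀ * A ω)) - m (L ω)) ∂μ
      = ∫ ω, (g ω * Y ω - (A ω - π (L ω)) * m (L ω)) ∂μ := by
        exact integral_congr_ae (Filter.Eventually.of_forall hsplit)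
    _ = (∫ ω, g ω * Y ω ∂μ) - ∫ ω, (A ω - π (L ω)) * m (L ω) ∂μ :=
        integral_sub hgY h2int
    _ = 0 := by rw [hkey, sub_self]
end

section
/- Suppose the multiplicative semiparametric model holds: μ[Y | σ(A,L)] = exp(ψ₀·A)·(b∘L) almost everywhere for some ψ₀ ∈ ℝ and some measurable b : E → ℝ with b∘L integrable, and the propensity score model is correctly specified: μ[A | σ(L)] = π∘L almost everywhere for a bounded measurable π : E → ℝ. Then for every measurable m : E → ℝ with m∘L integrable, the log-link doubly robust score has mean zero: ∫ (A − π(L))·(Y·exp(−ψ₀·A) − m(L)) dμ = 0. -/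
open MeasureTheory

/-- Under the multiplicative semiparametric model
`μ[Y | σ(A,L)] = exp(ψ₀·A)·(b∘L)` a.e. and a correctly specified propensity
score `μ[A | σ(L)] = π∘L` a.e. (π bounded measurable), the log-link doubly
robust score has mean zero for every measurable `m` with `m∘L` integrable. -/
theorem dr_score_mean_zero_propensity_model_log_link
    {Ω E : Type*} [MeasurableSpace Ω] [MeasurableSpace E]
    (μ : Measure Ω) [IsProbabilityMeasure μ]
    (L : Ω → E) (A Y : Ω → ℝ)
    (hL : Measurable L) (hA : Measurable A)
    (hA01 : ∀ ω, A ω = 0 ∨ A ω = 1)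
    (hY : Integrable Y μ)
    (ψ₀ : ℝ) (b : E → ℝ) (hb : Measurable b)
    (hbL : Integrable (fun ω => b (L ω)) μ)
    (hmodel : μ[Y | MeasurableSpace.comap (fun ω => (A ω, L ω)) inferInstance]
      =ᵐ[μ] fun ω => Real.exp (ψ₀ * A ω) * b (L ω))
    (π : E → ℝ) (hπ : Measurable π) (hπbdd : ∃ C, ∀ x, |π x| ≤ C)
    (hps : μ[A | MeasurableSpace.comap L inferInstance] =ᵐ[μ] fun ω => π (L ω)) :
    ∀ m : E → ℝ, Measurable m → Integrable (fun ω => m (L ω)) μ →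
      ∫ ω, (A ω - π (L ω)) * (Y ω * Real.exp (-(ψ₀ * A ω)) - m (L ω)) ∂μ = 0 := by
  intro m hm hmL
  obtain ⟨C, hC⟩ := hπbdd
  have hle₁ : MeasurableSpace.comap (fun ω => (A ω, L ω)) inferInstance
      ≤ ‹MeasurableSpace Ω› := (hA.prodMk hL).comap_le
  have hle₂ : MeasurableSpace.comap L inferInstance ≤ ‹MeasurableSpace Ω› :=
    hL.comap_le
  haveI : SigmaFinite (μ.trim hle₁) := IsFiniteMeasure.toSigmaFinite _
  haveI : SigmaFinite (μ.trim hle₂) := IsFiniteMeasure.toSigmaFinite _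
  have hAL : Measurable[MeasurableSpace.comap (fun ω => (A ω, L ω)) inferInstance]
      (fun ω => (A ω, L ω)) := Measurable.of_comap_le le_rfl
  have hLm : Measurable[MeasurableSpace.comap L inferInstance] L :=
    Measurable.of_comap_le le_rfl
  have hAbd : ∀ ω, ‖A ω‖ ≤ 1 := by
    intro ω; rcases hA01 ω with h | h <;> simp [h]
  have hDbd : ∀ ω, ‖A ω - π (L ω)‖ ≤ 1 + C := fun ω =>
    (norm_sub_le _ _).trans (add_le_add (hAbd ω) (hC _))
  have hDmeas : Measurable (fun ω => A ω - π (L ω)) := hA.sub (hπ.comp hL)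
  have hAint : Integrable A μ :=
    ⟨hA.aestronglyMeasurable, HasFiniteIntegral.of_bounded (C := 1) (ae_of_all μ hAbd)⟩
  have hπLint : Integrable (fun ω => π (L ω)) μ :=
    ⟨(hπ.comp hL).aestronglyMeasurable,
      HasFiniteIntegral.of_bounded (C := C) (ae_of_all μ fun ω => hC _)⟩
  have hDint : Integrable (fun ω => A ω - π (L ω)) μ := hAint.sub hπLint
  -- condExp of the residual given σ(L) is 0 a.e.
  have hDce : μ[A - fun ω => π (L ω) | MeasurableSpace.comap L inferInstance]
      =ᵐ[μ] 0 := by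
    have h1 := condExp_sub (m := MeasurableSpace.comap L inferInstance) hAint hπLint
    have h2 : μ[fun ω => π (L ω) | MeasurableSpace.comap L inferInstance]
        =ᵐ[μ] fun ω => π (L ω) := by
      rw [condExp_of_stronglyMeasurable hle₂ (f := fun ω => π (L ω))
        ((hπ.comp hLm).stronglyMeasurable) hπLint]
    filter_upwards [h1, h2, hps] with ω h1 h2 h3
    simp only [Pi.sub_apply, Pi.zero_apply] at *
    rw [h1, h2, h3, sub_self]
  -- key: for σ(L)-strongly measurable integrable f, ∫ f · (A - π L) = 0
  have key : ∀ f : Ω → ℝ,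
      StronglyMeasurable[MeasurableSpace.comap L inferInstance] f → Integrable f μ →
      ∫ ω, f ω * (A ω - π (L ω)) ∂μ = 0 := by
    intro f hfm hfint
    have hfD : Integrable (f * (A - fun ω => π (L ω))) μ := by
      have h := hfint.bdd_mul hDmeas.aestronglyMeasurable (ae_of_all μ hDbd)
      exact (integrable_congr (Filter.Eventually.of_forall fun ω =>
        (mul_comm _ _ : (A ω - π (L ω)) * f ω = _))).mp h
    have hpull := condExp_mul_of_stronglyMeasurable_left hfm hfD hDint
    have heq : ∫ ω, f ω * (A ω - π (L ω)) ∂μ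
        = ∫ ω, (μ[f * (A - fun ω => π (L ω)) | MeasurableSpace.comap L inferInstance]) ω ∂μ :=
      (integral_condExp hle₂ (f := f * (A - fun ω => π (L ω)))).symm
    rw [heq]
    have hzero : μ[f * (A - fun ω => π (L ω)) | MeasurableSpace.comap L inferInstance]
        =ᵐ[μ] 0 := by
      filter_upwards [hpull, hDce] with ω h1 h2
      simp only [Pi.mul_apply, Pi.zero_apply] at *
      rw [h1, h2, mul_zero]
    rw [integral_congr_ae hzero]
    simp
  -- part A : ∫ (A-πL)·e^{-ψ₀A}·Y = ∫ (A-πL)·(b∘L) = 0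
  have hexpbd : ∀ ω, ‖Real.exp (-(ψ₀ * A ω))‖ ≤ max 1 (Real.exp (-ψ₀)) := by
    intro ω
    rcases hA01 ω with h | h
    · simp [h, Real.norm_eq_abs, abs_of_pos (Real.exp_pos _)]
    · simp only [h, mul_one, Real.norm_eq_abs, abs_of_pos (Real.exp_pos _)]
      exact le_max_right _ _
  have hgmeas : Measurable[MeasurableSpace.comap (fun ω => (A ω, L ω)) inferInstance]
      (fun ω => (A ω - π (L ω)) * Real.exp (-(ψ₀ * A ω))) := by
    have h : (fun ω => (A ω - π (L ω)) * Real.exp (-(ψ₀ * A ω)))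
        = (fun p : ℝ × E => (p.1 - π p.2) * Real.exp (-(ψ₀ * p.1))) ∘
          (fun ω => (A ω, L ω)) := rfl
    rw [h]
    exact ((measurable_fst.sub (hπ.comp measurable_snd)).mul
      ((measurable_const.mul measurable_fst).neg.exp)).comp hAL
  have hgbd : ∀ ω, ‖(A ω - π (L ω)) * Real.exp (-(ψ₀ * A ω))‖
      ≤ (1 + C) * max 1 (Real.exp (-ψ₀)) := by
    intro ω
    rw [norm_mul]
    exact mul_le_mul (hDbd ω) (hexpbd ω) (norm_nonneg _)
      ((norm_nonneg _).trans (hDbd ω))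
  have hgY : Integrable ((fun ω => (A ω - π (L ω)) * Real.exp (-(ψ₀ * A ω))) * Y) μ :=
    hY.bdd_mul (hgmeas.mono hle₁ le_rfl).aestronglyMeasurable
      (ae_of_all μ hgbd)
  have hpullA := condExp_mul_of_stronglyMeasurable_left hgmeas.stronglyMeasurable hgY hY
  have hA1 : ∫ ω, (A ω - π (L ω)) * Real.exp (-(ψ₀ * A ω)) * Y ω ∂μ
      = ∫ ω, (μ[(fun ω => (A ω - π (L ω)) * Real.exp (-(ψ₀ * A ω))) * Y |
          MeasurableSpace.comap (fun ω => (A ω, L ω)) inferInstance]) ω ∂μ :=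
    (integral_condExp hle₁ (f := (fun ω => (A ω - π (L ω)) * Real.exp (-(ψ₀ * A ω))) * Y)).symm
  have hA2 : μ[(fun ω => (A ω - π (L ω)) * Real.exp (-(ψ₀ * A ω))) * Y |
        MeasurableSpace.comap (fun ω => (A ω, L ω)) inferInstance]
      =ᵐ[μ] fun ω => b (L ω) * (A ω - π (L ω)) := by
    filter_upwards [hpullA, hmodel] with ω h1 h2
    simp only [Pi.mul_apply] at *
    rw [h1, h2]
    have he : Real.exp (-(ψ₀ * A ω)) * Real.exp (ψ₀ * A ω) = 1 := by
      rw [← Real.exp_add]; simp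
    calc (A ω - π (L ω)) * Real.exp (-(ψ₀ * A ω)) * (Real.exp (ψ₀ * A ω) * b (L ω))
        = (Real.exp (-(ψ₀ * A ω)) * Real.exp (ψ₀ * A ω)) * ((A ω - π (L ω)) * b (L ω)) := by
          ring
      _ = b (L ω) * (A ω - π (L ω)) := by rw [he]; ring
  have hbL2 : StronglyMeasurable[MeasurableSpace.comap L inferInstance]
      (fun ω => b (L ω)) := (hb.comp hLm).stronglyMeasurable
  have hmL2 : StronglyMeasurable[MeasurableSpace.comap L inferInstance]
      (fun ω => m (L ω)) := (hm.comp hLm).stronglyMeasurable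
  have hpartA : ∫ ω, (A ω - π (L ω)) * Real.exp (-(ψ₀ * A ω)) * Y ω ∂μ = 0 := by
    rw [hA1, integral_congr_ae hA2]
    exact key (fun ω => b (L ω)) hbL2 hbL
  have hpartB : ∫ ω, (A ω - π (L ω)) * m (L ω) ∂μ = 0 := by
    rw [← key (fun ω => m (L ω)) hmL2 hmL]
    exact integral_congr_ae (Filter.Eventually.of_forall fun ω => mul_comm _ _)
  -- combine
  have hint1 : Integrable (fun ω => (A ω - π (L ω)) * Real.exp (-(ψ₀ * A ω)) * Y ω) μ := hgY
  have hint2 : Integrable (fun ω => (A ω - π (L ω)) * m (L ω)) μ := by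
    exact hmL.bdd_mul hDmeas.aestronglyMeasurable (ae_of_all μ hDbd)
  have hsplit : ∀ ω, (A ω - π (L ω)) * (Y ω * Real.exp (-(ψ₀ * A ω)) - m (L ω))
      = (A ω - π (L ω)) * Real.exp (-(ψ₀ * A ω)) * Y ω - (A ω - π (L ω)) * m (L ω) := by
    intro ω; ring
  rw [integral_congr_ae (Filter.Eventually.of_forall hsplit),
    integral_sub hint1 hint2, hpartA, hpartB, sub_zero]
end

section
/- Let A : Ω → ℝ be measurable taking values in {0,1}, H : Ω → ℝ measurable, and L : Ω → E measurable. Assume the location-shift condition A ⫫ H | σ(L) and that μ[A | σ(L)] = π∘L almost everywhere for a bounded measurable π : E → ℝ. Then for every measurable f : ℝ × E → ℝ such that ω ↦ f(H ω, L ω) is integrable, the residualised treatment is orthogonal to any function of (H, L): ∫ (A − π(L))·f(H, L) dμ = 0. -/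
open MeasureTheory ProbabilityTheory
open scoped NNReal ENNReal

/-- Under the location-shift condition `A ⫫ H | σ(L)` and a
correctly specified propensity score `μ[A | σ(L)] = π∘L` a.e., the residualised
treatment is orthogonal to every integrable function of `(H, L)`. -/
theorem residual_orthogonal_of_condIndepFun
    {Ω E : Type*} [MeasurableSpace Ω] [StandardBorelSpace Ω] [MeasurableSpace E]
    (μ : Measure Ω) [IsProbabilityMeasure μ]
    (L : Ω → E) (A H : Ω → ℝ)
    (hL : Measurable L) (hA : Measurable A) (hH : Measurable H)
    (hA01 : ∀ ω, A ω = 0 ∨ A ω = 1)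
    (hCI : CondIndepFun (MeasurableSpace.comap L inferInstance) hL.comap_le A H μ)
    (π : E → ℝ) (hπ : Measurable π) (hπbdd : ∃ C, ∀ x, |π x| ≤ C)
    (hps : μ[A | MeasurableSpace.comap L inferInstance] =ᵐ[μ] fun ω => π (L ω)) :
    ∀ f : ℝ × E → ℝ, Measurable f → Integrable (fun ω => f (H ω, L ω)) μ →
      ∫ ω, (A ω - π (L ω)) * f (H ω, L ω) ∂μ = 0 := by
  classical
  intro f hf hfInt
  obtain ⟨C, hC⟩ := hπbdd
  have h𝒢 : MeasurableSpace.comap L inferInstance ≤ ‹MeasurableSpace Ω› := hL.comap_le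
  haveI : SigmaFinite (μ.trim h𝒢) := by infer_instance
  -- basic facts about A
  set s : Set Ω := A ⁻¹' {1} with hsdef
  have hs : MeasurableSet s := hA (measurableSet_singleton 1)
  have hAind : A = s.indicator (fun _ => (1 : ℝ)) := by
    funext ω
    rcases hA01 ω with h0 | h1
    · have hns : ω ∉ s := by simp [hsdef, h0]
      simp [Set.indicator_of_notMem hns, h0]
    · have hms : ω ∈ s := by simp [hsdef, h1]
      simp [Set.indicator_of_mem hms, h1]
  have hA0 : ∀ ω, 0 ≤ A ω := fun ω => by rcases hA01 ω with h | h <;> simp [h]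
  have hA1 : ∀ ω, A ω ≤ 1 := fun ω => by rcases hA01 ω with h | h <;> simp [h]
  have hAint : Integrable A μ := by
    refine Integrable.mono' (integrable_const 1) hA.aestronglyMeasurable ?_
    filter_upwards with ω
    rcases hA01 ω with h | h <;> simp [h]
  -- basic facts about π ∘ L
  have hπL_meas : Measurable fun ω => π (L ω) := hπ.comp hL
  have hπL_meas𝒢 : Measurable[MeasurableSpace.comap L inferInstance] fun ω => π (L ω) :=
    hπ.comp (Measurable.le le_rfl (measurable_iff_comap_le.mpr le_rfl))
  have hπLint : Integrable (fun ω => π (L ω)) μ := by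
    refine Integrable.mono' (integrable_const C) hπL_meas.aestronglyMeasurable ?_
    filter_upwards with ω
    simpa [Real.norm_eq_abs] using hC (L ω)
  have hπL0 : 0 ≤ᵐ[μ] fun ω => π (L ω) := by
    have h0 : (0 : Ω → ℝ) ≤ᵐ[μ] μ[A|MeasurableSpace.comap L inferInstance] :=
      condExp_nonneg (Filter.Eventually.of_forall hA0)
    filter_upwards [h0, hps] with ω h1 h2
    rw [← h2]; exact h1
  -- the key identity on rectangles
  have key : ∀ u : Set ℝ, ∀ v : Set E, MeasurableSet u → MeasurableSet v →
      ∫ ω in H ⁻¹' u ∩ L ⁻¹' v, A ω ∂μ = ∫ ω in H ⁻¹' u ∩ L ⁻¹' v, π (L ω) ∂μ := by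
    intro u v hu hv
    have hHu : MeasurableSet (H ⁻¹' u) := hH hu
    have hLv : MeasurableSet (L ⁻¹' v) := hL hv
    have hLv𝒢 : MeasurableSet[MeasurableSpace.comap L inferInstance] (L ⁻¹' v) := ⟨v, hv, rfl⟩
    -- conditional independence on the relevant sets
    have hmul : (μ⟦s ∩ H ⁻¹' u | MeasurableSpace.comap L inferInstance⟧)
        =ᵐ[μ] fun ω => (μ⟦s | MeasurableSpace.comap L inferInstance⟧) ω *
          (μ⟦H ⁻¹' u | MeasurableSpace.comap L inferInstance⟧) ω :=
      (condIndepFun_iff_condExp_inter_preimage_eq_mul hA hH).mp hCI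
        {1} u (measurableSet_singleton 1) hu
    have hsA : (μ⟦s | MeasurableSpace.comap L inferInstance⟧) =ᵐ[μ] fun ω => π (L ω) := by
      have h1 : (μ⟦s | MeasurableSpace.comap L inferInstance⟧)
          = μ[A|MeasurableSpace.comap L inferInstance] := by
        conv_rhs => rw [hAind]
      rw [h1]; exact hps
    -- indicators
    set X : Ω → ℝ := (s ∩ H ⁻¹' u).indicator (fun _ => (1 : ℝ)) with hXdef
    set Y : Ω → ℝ := (H ⁻¹' u).indicator (fun _ => (1 : ℝ)) with hYdef
    have hXint : Integrable X μ := (integrable_const (1 : ℝ)).indicator (hs.inter hHu)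
    have hYint : Integrable Y μ := (integrable_const (1 : ℝ)).indicator hHu
    -- step 1: ∫_{H⁻¹u ∩ L⁻¹v} A = ∫_{L⁻¹v} X
    have step1 : ∫ ω in H ⁻¹' u ∩ L ⁻¹' v, A ω ∂μ = ∫ ω in L ⁻¹' v, X ω ∂μ := by
      rw [hAind, setIntegral_indicator hs, hXdef, setIntegral_indicator (hs.inter hHu)]
      have hsets : H ⁻¹' u ∩ L ⁻¹' v ∩ s = L ⁻¹' v ∩ (s ∩ H ⁻¹' u) := by
        ext ω; simp only [Set.mem_inter_iff]; tauto
      rw [hsets]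
    -- step 2: pass through the conditional expectation
    have step2 : ∫ ω in L ⁻¹' v, X ω ∂μ
        = ∫ ω in L ⁻¹' v, (μ[X|MeasurableSpace.comap L inferInstance]) ω ∂μ :=
      (setIntegral_condExp h𝒢 hXint hLv𝒢).symm
    -- step 3: condexp factorises
    have step3 : (μ[X|MeasurableSpace.comap L inferInstance])
        =ᵐ[μ] fun ω => π (L ω) * (μ[Y|MeasurableSpace.comap L inferInstance]) ω := by
      filter_upwards [hmul, hsA] with ω h1 h2
      have h0 : (μ[X|MeasurableSpace.comap L inferInstance]) ω
          = (μ⟦s ∩ H ⁻¹' u | MeasurableSpace.comap L inferInstance⟧) ω := rfl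
      rw [h0, h1, h2]
    -- step 4: pull-out property
    have step4 : (fun ω => π (L ω) * (μ[Y|MeasurableSpace.comap L inferInstance]) ω)
        =ᵐ[μ] μ[fun ω => π (L ω) * Y ω|MeasurableSpace.comap L inferInstance] := by
      have h := condExp_stronglyMeasurable_mul_of_bound h𝒢
        (hπL_meas𝒢.stronglyMeasurable) hYint C
        (Filter.Eventually.of_forall fun ω => by
          simpa [Real.norm_eq_abs] using hC (L ω))
      exact h.symm
    have hπYint : Integrable (fun ω => π (L ω) * Y ω) μ := by
      refine hYint.bdd_mul (c := C) hπL_meas.aestronglyMeasurable (Filter.Eventually.of_forall fun ω => ?_)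
      simpa [Real.norm_eq_abs] using hC (L ω)
    -- step 5: integrate back
    have step5 : ∫ ω in L ⁻¹' v,
          (μ[fun ω => π (L ω) * Y ω|MeasurableSpace.comap L inferInstance]) ω ∂μ
        = ∫ ω in L ⁻¹' v, π (L ω) * Y ω ∂μ :=
      setIntegral_condExp h𝒢 hπYint hLv𝒢
    -- step 6: rewrite as set integral
    have step6 : ∫ ω in L ⁻¹' v, π (L ω) * Y ω ∂μ
        = ∫ ω in H ⁻¹' u ∩ L ⁻¹' v, π (L ω) ∂μ := by
      have hrw : (fun ω => π (L ω) * Y ω)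
          = (H ⁻¹' u).indicator (fun ω => π (L ω)) := by
        funext ω
        by_cases hω : ω ∈ H ⁻¹' u
        · simp [hYdef, Set.indicator_of_mem hω]
        · simp [hYdef, Set.indicator_of_notMem hω]
      rw [hrw, setIntegral_indicator hHu, Set.inter_comm]
    calc ∫ ω in H ⁻¹' u ∩ L ⁻¹' v, A ω ∂μ
        = ∫ ω in L ⁻¹' v, X ω ∂μ := step1
      _ = ∫ ω in L ⁻¹' v, (μ[X|MeasurableSpace.comap L inferInstance]) ω ∂μ := step2
      _ = ∫ ω in L ⁻¹' v, π (L ω) * (μ[Y|MeasurableSpace.comap L inferInstance]) ω ∂μ :=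
          integral_congr_ae (ae_restrict_of_ae step3)
      _ = ∫ ω in L ⁻¹' v,
            (μ[fun ω => π (L ω) * Y ω|MeasurableSpace.comap L inferInstance]) ω ∂μ :=
          integral_congr_ae (ae_restrict_of_ae step4)
      _ = ∫ ω in L ⁻¹' v, π (L ω) * Y ω ∂μ := step5
      _ = ∫ ω in H ⁻¹' u ∩ L ⁻¹' v, π (L ω) ∂μ := step6
  -- define the two pushforward measures
  have hHL : Measurable fun ω => (H ω, L ω) := hH.prodMk hL
  set dA : Ω → ℝ≥0 := fun ω => Real.toNNReal (A ω) with hdAdef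
  set dπ : Ω → ℝ≥0 := fun ω => Real.toNNReal (π (L ω)) with hdπdef
  have hdA_meas : Measurable dA := hA.real_toNNReal
  have hdπ_meas : Measurable dπ := hπL_meas.real_toNNReal
  set ν₁ : Measure (ℝ × E) :=
    (μ.withDensity fun ω => (dA ω : ℝ≥0∞)).map fun ω => (H ω, L ω) with hν₁def
  set ν₂ : Measure (ℝ × E) :=
    (μ.withDensity fun ω => (dπ ω : ℝ≥0∞)).map fun ω => (H ω, L ω) with hν₂def
  have hofRealA : (fun ω => (dA ω : ℝ≥0∞)) = fun ω => ENNReal.ofReal (A ω) := rfl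
  have hofRealπ : (fun ω => (dπ ω : ℝ≥0∞)) = fun ω => ENNReal.ofReal (π (L ω)) := rfl
  haveI hfin1 : IsFiniteMeasure (μ.withDensity fun ω => (dA ω : ℝ≥0∞)) := by
    refine isFiniteMeasure_withDensity ?_
    have hle : ∫⁻ ω, (dA ω : ℝ≥0∞) ∂μ ≤ ∫⁻ _, 1 ∂μ := by
      refine lintegral_mono fun ω => ?_
      exact ENNReal.ofReal_le_one.mpr (hA1 ω)
    refine ne_of_lt (lt_of_le_of_lt hle ?_)
    simp
  haveI hfin2 : IsFiniteMeasure (μ.withDensity fun ω => (dπ ω : ℝ≥0∞)) := by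
    refine isFiniteMeasure_withDensity ?_
    have hle : ∫⁻ ω, (dπ ω : ℝ≥0∞) ∂μ ≤ ∫⁻ _, ENNReal.ofReal C ∂μ := by
      refine lintegral_mono fun ω => ?_
      exact ENNReal.ofReal_le_ofReal ((abs_le.mp (hC (L ω))).2)
    refine ne_of_lt (lt_of_le_of_lt hle ?_)
    simp [lt_top_iff_ne_top]
  -- the rectangle computation as ℝ≥0∞-valued equalities
  have hset : ∀ u : Set ℝ, ∀ v : Set E, MeasurableSet u → MeasurableSet v →
      ν₁ (u ×ˢ v) = ν₂ (u ×ˢ v) := by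
    intro u v hu hv
    have huv : MeasurableSet (u ×ˢ v) := hu.prod hv
    have hpre : (fun ω => (H ω, L ω)) ⁻¹' (u ×ˢ v) = H ⁻¹' u ∩ L ⁻¹' v :=
      Set.mk_preimage_prod H L
    have hB : MeasurableSet (H ⁻¹' u ∩ L ⁻¹' v) := (hH hu).inter (hL hv)
    rw [hν₁def, hν₂def, Measure.map_apply hHL huv, Measure.map_apply hHL huv, hpre,
      withDensity_apply _ hB, withDensity_apply _ hB, hofRealA, hofRealπ,
      ← ofReal_integral_eq_lintegral_ofReal (hAint.restrict)
        (ae_restrict_of_ae (Filter.Eventually.of_forall hA0)),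
      ← ofReal_integral_eq_lintegral_ofReal (hπLint.restrict) (ae_restrict_of_ae hπL0),
      key u v hu hv]
  have hν : ν₁ = ν₂ := by
    refine ext_of_generate_finite _ generateFrom_prod.symm isPiSystem_prod ?_ ?_
    · rintro t ⟨u, hu, v, hv, rfl⟩
      exact hset u v hu hv
    · have h := hset Set.univ Set.univ MeasurableSet.univ MeasurableSet.univ
      simpa using h
  -- relate the integrals to the pushforward measures
  have habs : ∀ ω, |A ω| ≤ 1 := fun ω => by
    rcases hA01 ω with h | h <;> simp [h]
  have hint1 : Integrable (fun ω => A ω * f (H ω, L ω)) μ := by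
    refine hfInt.bdd_mul (c := 1) hA.aestronglyMeasurable (Filter.Eventually.of_forall fun ω => ?_)
    simpa [Real.norm_eq_abs] using habs ω
  have hint2 : Integrable (fun ω => π (L ω) * f (H ω, L ω)) μ := by
    refine hfInt.bdd_mul (c := C) hπL_meas.aestronglyMeasurable (Filter.Eventually.of_forall fun ω => ?_)
    simpa [Real.norm_eq_abs] using hC (L ω)
  have hι1 : ∫ ω, A ω * f (H ω, L ω) ∂μ = ∫ p, f p ∂ν₁ := by
    rw [hν₁def, integral_map hHL.aemeasurable hf.aestronglyMeasurable,
      integral_withDensity_eq_integral_smul hdA_meas]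
    refine integral_congr_ae (Filter.Eventually.of_forall fun ω => ?_)
    simp [hdAdef, NNReal.smul_def, Real.coe_toNNReal _ (hA0 ω)]
  have hι2 : ∫ ω, π (L ω) * f (H ω, L ω) ∂μ = ∫ p, f p ∂ν₂ := by
    rw [hν₂def, integral_map hHL.aemeasurable hf.aestronglyMeasurable,
      integral_withDensity_eq_integral_smul hdπ_meas]
    refine integral_congr_ae ?_
    filter_upwards [hπL0] with ω hω
    simp [hdπdef, NNReal.smul_def, Real.coe_toNNReal _ hω]
  have hfinal : ∫ ω, (A ω - π (L ω)) * f (H ω, L ω) ∂μ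
      = ∫ ω, A ω * f (H ω, L ω) ∂μ - ∫ ω, π (L ω) * f (H ω, L ω) ∂μ := by
    rw [← integral_sub hint1 hint2]
    refine integral_congr_ae (Filter.Eventually.of_forall fun ω => ?_)
    ring
  rw [hfinal, hι1, hι2, hν, sub_self]
end

section
/- For i ∈ Fin n, let (Aᵢ, Hᵢ, Lᵢ) : Ω → ℝ × ℝ × E be measurable with each Aᵢ taking values in {0,1}, and suppose the family of triples ((Aᵢ, Hᵢ, Lᵢ))_{i ∈ Fin n} is independent (iIndepFun). Suppose for each i that Aᵢ ⫫ Hᵢ | σ(Lᵢ) and μ[Aᵢ | σ(Lᵢ)] = π∘Lᵢ almost everywhere, for a fixed bounded measurable π : E → ℝ. Let 𝒢 be the σ-algebra generated by the joint map ω ↦ ((Hᵢ ω, Lᵢ ω))_{i ∈ Fin n}. Then for each i, μ[Aᵢ | 𝒢] = π∘Lᵢ almost everywhere. -/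
open MeasureTheory ProbabilityTheory


lemma integrable_of_bdd {Ω : Type*} {mΩ : MeasurableSpace Ω} {μ : Measure Ω}
    [IsFiniteMeasure μ] {f : Ω → ℝ} {C : ℝ}
    (hf : AEStronglyMeasurable f μ) (hC : ∀ ω, |f ω| ≤ C) : Integrable f μ :=
  (integrable_const C).mono' hf (Filter.Eventually.of_forall fun ω => by
    simpa [Real.norm_eq_abs] using hC ω)

lemma setIntegral_eq_on_generateFrom {Ω : Type*} {m mΩ : MeasurableSpace Ω} {μ : Measure Ω}
    [IsFiniteMeasure μ] {C : Set (Set Ω)} (hC : IsPiSystem C)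
    (hm : m ≤ mΩ) (hgen : m = MeasurableSpace.generateFrom C)
    {f g : Ω → ℝ} (hf : Integrable f μ) (hg : Integrable g μ)
    (h_univ : ∫ x, f x ∂μ = ∫ x, g x ∂μ)
    (h_basic : ∀ s ∈ C, ∫ x in s, f x ∂μ = ∫ x in s, g x ∂μ) :
    ∀ s, MeasurableSet[m] s → ∫ x in s, f x ∂μ = ∫ x in s, g x ∂μ := by
  intro s hs
  refine MeasurableSpace.induction_on_inter (m := m)
    (C := fun s _ => ∫ x in s, f x ∂μ = ∫ x in s, g x ∂μ) hgen hC (by simp) h_basic ?_ ?_ s hs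
  · intro t htm ht
    have htΩ : MeasurableSet[mΩ] t := hm _ htm
    have h1 := integral_add_compl htΩ hf
    have h2 := integral_add_compl htΩ hg
    linarith
  · intro t hdisj htm hts
    have h1 := hasSum_integral_iUnion (μ := μ) (X := Ω)
      (fun n => hm _ (htm n)) hdisj hf.integrableOn
    have h2 := hasSum_integral_iUnion (μ := μ) (X := Ω)
      (fun n => hm _ (htm n)) hdisj hg.integrableOn
    rw [← h1.tsum_eq, ← h2.tsum_eq]
    exact tsum_congr hts

lemma condexp_pair_eq_propensity {Ω E : Type*} [MeasurableSpace Ω] [StandardBorelSpace Ω]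
    [MeasurableSpace E] (μ : Measure Ω) [IsProbabilityMeasure μ]
    {A H : Ω → ℝ} {L : Ω → E} (hA : Measurable A) (hH : Measurable H) (hL : Measurable L)
    (hA01 : ∀ ω, A ω = 0 ∨ A ω = 1)
    {π : E → ℝ} (hπ : Measurable π) {Cπ : ℝ} (hπbdd : ∀ x, |π x| ≤ Cπ)
    (hCI : CondIndepFun (MeasurableSpace.comap L inferInstance) hL.comap_le A H μ)
    (hps : μ[A | MeasurableSpace.comap L inferInstance] =ᵐ[μ] fun ω => π (L ω)) :
    μ[A | MeasurableSpace.comap (fun ω => (H ω, L ω)) inferInstance]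
      =ᵐ[μ] fun ω => π (L ω) := by
  have hmL : MeasurableSpace.comap L inferInstance ≤ ‹MeasurableSpace Ω› := hL.comap_le
  have hpair : Measurable fun ω => (H ω, L ω) := hH.prodMk hL
  have hmHL : MeasurableSpace.comap (fun ω => (H ω, L ω)) inferInstance
      ≤ ‹MeasurableSpace Ω› := hpair.comap_le
  have hpairm : Measurable[MeasurableSpace.comap (fun ω => (H ω, L ω)) inferInstance]
      fun ω => (H ω, L ω) := measurable_iff_comap_le.2 le_rfl
  have hLmHL : Measurable[MeasurableSpace.comap (fun ω => (H ω, L ω)) inferInstance] L :=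
    measurable_snd.comp hpairm
  have hHmHL : Measurable[MeasurableSpace.comap (fun ω => (H ω, L ω)) inferInstance] H :=
    measurable_fst.comp hpairm
  have hLmL : Measurable[MeasurableSpace.comap L inferInstance] L :=
    measurable_iff_comap_le.2 le_rfl
  -- A is an indicator
  set B := A ⁻¹' {1} with hBdef
  have hB : MeasurableSet B := hA (measurableSet_singleton 1)
  have hAind : A = B.indicator fun _ => (1:ℝ) := by
    funext ω
    by_cases hω : ω ∈ B
    · have h1 : A ω = 1 := hω
      simp [Set.indicator_of_mem hω, h1]
    · rcases hA01 ω with h | h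
      · simp [Set.indicator_of_notMem hω, h]
      · exact absurd (show ω ∈ B from h) hω
  have hAbd : ∀ ω, |A ω| ≤ 1 := fun ω => by rcases hA01 ω with h | h <;> simp [h]
  have hAint : Integrable A μ := integrable_of_bdd hA.aestronglyMeasurable hAbd
  have hπLint : Integrable (fun ω => π (L ω)) μ :=
    integrable_of_bdd (hπ.comp hL).aestronglyMeasurable fun ω => hπbdd _
  -- π-system of rectangles
  set C : Set (Set Ω) :=
    {s | ∃ t u, MeasurableSet t ∧ MeasurableSet u ∧ s = H ⁻¹' t ∩ L ⁻¹' u} with hCdef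
  have hpiC : IsPiSystem C := by
    rintro s ⟨t1, u1, ht1, hu1, rfl⟩ s' ⟨t2, u2, ht2, hu2, rfl⟩ -
    exact ⟨t1 ∩ t2, u1 ∩ u2, ht1.inter ht2, hu1.inter hu2, by ext ω; simp; tauto⟩
  have hgen : MeasurableSpace.comap (fun ω => (H ω, L ω)) inferInstance
      = MeasurableSpace.generateFrom C := by
    refine le_antisymm ?_ (MeasurableSpace.generateFrom_le ?_)
    · have hHg : Measurable[MeasurableSpace.generateFrom C] H := fun t ht =>
        MeasurableSpace.measurableSet_generateFrom
          ⟨t, Set.univ, ht, MeasurableSet.univ, by simp⟩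
      have hLg : Measurable[MeasurableSpace.generateFrom C] L := fun u hu =>
        MeasurableSpace.measurableSet_generateFrom
          ⟨Set.univ, u, MeasurableSet.univ, hu, by simp⟩
      exact measurable_iff_comap_le.1 (hHg.prodMk hLg)
    · rintro s ⟨t, u, ht, hu, rfl⟩
      exact (hHmHL ht).inter (hLmHL hu)
  -- the basic rectangle computation
  have h_basic : ∀ s ∈ C, ∫ x in s, π (L x) ∂μ = ∫ x in s, A x ∂μ := by
    rintro s ⟨t, u, ht, hu, rfl⟩
    set T := H ⁻¹' t with hTdef
    set U := L ⁻¹' u with hUdef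
    have hTm : MeasurableSet T := hH ht
    have hUmL : MeasurableSet[MeasurableSpace.comap L inferInstance] U := ⟨u, hu, rfl⟩
    have hUm : MeasurableSet U := hmL _ hUmL
    have hTU : T ∩ U = U ∩ T := Set.inter_comm _ _
    -- indicator of T as ℝ-valued function
    set χT : Ω → ℝ := T.indicator fun _ => (1:ℝ) with hχTdef
    have hχTint : Integrable χT μ := (integrable_const (1:ℝ)).indicator hTm
    -- LHS
    have hφeq : ∀ f : Ω → ℝ, T.indicator f = fun ω => f ω * χT ω := by
      intro f; funext ω; by_cases hω : ω ∈ T <;> simp [hχTdef, Set.indicator_apply, hω]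
    have hLHS : ∫ x in T ∩ U, π (L x) ∂μ
        = ∫ x in U, (fun ω => π (L ω) * χT ω) x ∂μ := by
      rw [← hφeq, setIntegral_indicator hTm, hTU]
    have hφint : Integrable (fun ω => π (L ω) * χT ω) μ := by
      refine integrable_of_bdd ((hπ.comp hL).mul
        (measurable_const.indicator hTm)).aestronglyMeasurable (C := |Cπ|) fun ω => ?_
      rw [abs_mul]
      calc |π (L ω)| * |χT ω| ≤ |Cπ| * 1 := by
            refine mul_le_mul ((hπbdd _).trans (le_abs_self _)) ?_ (abs_nonneg _) (abs_nonneg _)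
            by_cases hω : ω ∈ T <;> simp [hχTdef, Set.indicator_apply, hω]
        _ = |Cπ| := mul_one _
    have hpull : μ[fun ω => π (L ω) * χT ω | MeasurableSpace.comap L inferInstance]
        =ᵐ[μ] fun ω => π (L ω) * (μ[χT | MeasurableSpace.comap L inferInstance]) ω := by
      have h := condExp_mul_of_stronglyMeasurable_left (μ := μ)
        ((hπ.comp hLmL).stronglyMeasurable) (g := χT) ?_ hχTint
      · exact h
      · exact hφint
    have hLHS2 : ∫ x in U, (fun ω => π (L ω) * χT ω) x ∂μ
        = ∫ x in U, π (L x) * (μ[χT | MeasurableSpace.comap L inferInstance]) x ∂μ := by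
      rw [← setIntegral_condExp hmL hφint hUmL]
      exact setIntegral_congr_ae hUm (hpull.mono fun x hx _ => hx)
    -- RHS
    have hAT : T.indicator A = (B ∩ T).indicator fun _ => (1:ℝ) := by
      funext ω
      by_cases hωT : ω ∈ T <;> by_cases hωB : ω ∈ B <;>
        simp [Set.indicator_apply, hωT, hωB, hAind]
    have hBTint : Integrable ((B ∩ T).indicator fun _ => (1:ℝ)) μ :=
      (integrable_const (1:ℝ)).indicator (hB.inter hTm)
    have hRHS : ∫ x in T ∩ U, A x ∂μ
        = ∫ x in U, (μ[(B ∩ T).indicator fun _ => (1:ℝ) |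
            MeasurableSpace.comap L inferInstance]) x ∂μ := by
      rw [hTU, ← setIntegral_indicator hTm, hAT, ← setIntegral_condExp hmL hBTint hUmL]
    -- conditional independence
    have hmul := (condIndepFun_iff_condExp_inter_preimage_eq_mul
      (hm' := hmL) hA hH).1 hCI {1} t (measurableSet_singleton 1) ht
    have hcondB : μ[B.indicator fun _ => (1:ℝ) | MeasurableSpace.comap L inferInstance]
        =ᵐ[μ] fun ω => π (L ω) := by
      rw [← hAind]; exact hps
    have hRHS2 : ∫ x in U, (μ[(B ∩ T).indicator fun _ => (1:ℝ) |
            MeasurableSpace.comap L inferInstance]) x ∂μ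
        = ∫ x in U, π (L x) * (μ[χT | MeasurableSpace.comap L inferInstance]) x ∂μ := by
      refine setIntegral_congr_ae hUm ?_
      filter_upwards [hmul, hcondB] with x h1 h2 _
      exact (show μ[(B ∩ T).indicator fun _ => (1:ℝ) | MeasurableSpace.comap L inferInstance] x
          = μ[B.indicator fun _ => (1:ℝ) | MeasurableSpace.comap L inferInstance] x
            * μ[χT | MeasurableSpace.comap L inferInstance] x from h1).trans (by rw [h2])
    rw [hLHS, hLHS2, hRHS, hRHS2]
  -- total integrals agree
  have h_univ : ∫ x, π (L x) ∂μ = ∫ x, A x ∂μ := by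
    calc ∫ x, π (L x) ∂μ = ∫ x, (μ[A | MeasurableSpace.comap L inferInstance]) x ∂μ :=
          (integral_congr_ae hps).symm
      _ = ∫ x, A x ∂μ := integral_condExp hmL
  refine (ae_eq_condExp_of_forall_setIntegral_eq hmHL hAint
    (fun s _ _ => hπLint.integrableOn) (fun s hs _ => ?_) ?_).symm
  · exact setIntegral_eq_on_generateFrom hpiC hmHL hgen hπLint hAint h_univ h_basic s hs
  · exact ((hπ.comp hLmHL).stronglyMeasurable).aestronglyMeasurable
/-- For independent triples `(Aᵢ, Hᵢ, Lᵢ)` with `Aᵢ ⫫ Hᵢ | σ(Lᵢ)`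
and `μ[Aᵢ | σ(Lᵢ)] = π∘Lᵢ` a.e., the conditional expectation of each `Aᵢ` given
the σ-algebra generated by the whole family `((Hᵢ, Lᵢ))ᵢ` is `π∘Lᵢ` a.e. -/
theorem condexp_given_all_HL_eq_propensity
    {Ω E : Type*} [MeasurableSpace Ω] [StandardBorelSpace Ω] [MeasurableSpace E]
    (μ : Measure Ω) [IsProbabilityMeasure μ]
    (n : ℕ) (A H : Fin n → Ω → ℝ) (L : Fin n → Ω → E)
    (hA : ∀ i, Measurable (A i)) (hH : ∀ i, Measurable (H i))
    (hL : ∀ i, Measurable (L i))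
    (hA01 : ∀ i ω, A i ω = 0 ∨ A i ω = 1)
    (hIndep : iIndepFun
      (fun i ω => (A i ω, H i ω, L i ω)) μ)
    (π : E → ℝ) (hπ : Measurable π) (hπbdd : ∃ C, ∀ x, |π x| ≤ C)
    (hCI : ∀ i, CondIndepFun (MeasurableSpace.comap (L i) inferInstance)
      (hL i).comap_le (A i) (H i) μ)
    (hps : ∀ i, μ[A i | MeasurableSpace.comap (L i) inferInstance]
      =ᵐ[μ] fun ω => π (L i ω)) :
    ∀ i, μ[A i | MeasurableSpace.comap (fun ω => fun j => (H j ω, L j ω)) inferInstance]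
      =ᵐ[μ] fun ω => π (L i ω) := by
  intro i
  obtain ⟨Cπ, hπbdd⟩ := hπbdd
  have htriple : ∀ j, Measurable fun ω => (A j ω, H j ω, L j ω) :=
    fun j => (hA j).prodMk ((hH j).prodMk (hL j))
  have hpairj : ∀ j, Measurable fun ω => (H j ω, L j ω) := fun j => (hH j).prodMk (hL j)
  have hjoint : Measurable fun ω => fun j => (H j ω, L j ω) :=
    measurable_pi_lambda _ fun j => hpairj j
  have hm𝒢 : MeasurableSpace.comap (fun ω => fun j => (H j ω, L j ω)) inferInstance
      ≤ ‹MeasurableSpace Ω› := hjoint.comap_le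
  have hjoint𝒢 :
      Measurable[MeasurableSpace.comap (fun ω => fun j => (H j ω, L j ω)) inferInstance]
      fun ω => fun j => (H j ω, L j ω) := measurable_iff_comap_le.2 le_rfl
  have hpair𝒢 : ∀ j,
      Measurable[MeasurableSpace.comap (fun ω => fun j => (H j ω, L j ω)) inferInstance]
      fun ω => (H j ω, L j ω) := fun j => (measurable_pi_apply j).comp hjoint𝒢
  have hL𝒢 : Measurable[MeasurableSpace.comap (fun ω => fun j => (H j ω, L j ω)) inferInstance]
      (L i) := measurable_snd.comp (hpair𝒢 i)
  -- step 1
  have hstep1 := condexp_pair_eq_propensity μ (hA i) (hH i) (hL i) (hA01 i) hπ hπbdd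
    (hCI i) (hps i)
  -- integrability
  have hAbd : ∀ ω, |A i ω| ≤ 1 := fun ω => by rcases hA01 i ω with h | h <;> simp [h]
  have hAint : Integrable (A i) μ := integrable_of_bdd (hA i).aestronglyMeasurable hAbd
  have hπLint : Integrable (fun ω => π (L i ω)) μ :=
    integrable_of_bdd (hπ.comp (hL i)).aestronglyMeasurable fun ω => hπbdd _
  -- π-system of cylinders
  set C : Set (Set Ω) := {s | ∃ t : Fin n → Set (ℝ × E), (∀ j, MeasurableSet (t j)) ∧
    s = ⋂ j, (fun ω => (H j ω, L j ω)) ⁻¹' t j} with hCdef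
  have hpiC : IsPiSystem C := by
    rintro s ⟨t1, ht1, rfl⟩ s' ⟨t2, ht2, rfl⟩ -
    refine ⟨fun j => t1 j ∩ t2 j, fun j => (ht1 j).inter (ht2 j), ?_⟩
    ext ω
    simp only [Set.mem_inter_iff, Set.mem_iInter, Set.mem_preimage]
    exact ⟨fun h j => ⟨h.1 j, h.2 j⟩, fun h => ⟨fun j => (h j).1, fun j => (h j).2⟩⟩
  have hgen : MeasurableSpace.comap (fun ω => fun j => (H j ω, L j ω)) inferInstance
      = MeasurableSpace.generateFrom C := by
    refine le_antisymm ?_ (MeasurableSpace.generateFrom_le ?_)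
    · have hp : ∀ j, Measurable[MeasurableSpace.generateFrom C]
          fun ω => (H j ω, L j ω) := by
        intro j t ht
        refine MeasurableSpace.measurableSet_generateFrom
          ⟨fun k => if k = j then t else Set.univ, fun k => by by_cases hk : k = j <;>
            simp [hk, ht], ?_⟩
        ext ω
        simp only [Set.mem_preimage, Set.mem_iInter]
        constructor
        · intro h k
          by_cases hk : k = j
          · subst hk; simp [h]
          · simp [hk]
        · intro h
          have := h j
          simpa using this
      have hjm : Measurable[MeasurableSpace.generateFrom C]
          fun ω => fun j => (H j ω, L j ω) :=
        @measurable_pi_lambda Ω (Fin n) (fun _ => ℝ × E)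
          (MeasurableSpace.generateFrom C) (fun _ => inferInstance) _ hp
      exact measurable_iff_comap_le.1 hjm
    · rintro s ⟨t, ht, rfl⟩
      exact MeasurableSet.iInter fun j => hpair𝒢 j (ht j)
  -- independence of the i-th triple from the others
  have hm_le : ∀ j, MeasurableSpace.comap (fun ω => (A j ω, H j ω, L j ω)) inferInstance
      ≤ ‹MeasurableSpace Ω› := fun j => (htriple j).comap_le
  have hIndep' : iIndep (fun j => MeasurableSpace.comap
      (fun ω => (A j ω, H j ω, L j ω)) inferInstance) μ := hIndep
  have hbi := indep_biSup_compl hm_le hIndep' {i}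
  rw [iSup_singleton] at hbi
  -- measurability w.r.t. the i-th triple σ-algebra
  have htriple_i : Measurable[MeasurableSpace.comap
      (fun ω => (A i ω, H i ω, L i ω)) inferInstance]
      fun ω => (A i ω, H i ω, L i ω) := measurable_iff_comap_le.2 le_rfl
  have hAmi : Measurable[MeasurableSpace.comap
      (fun ω => (A i ω, H i ω, L i ω)) inferInstance] (A i) :=
    measurable_fst.comp htriple_i
  have hpairmi : Measurable[MeasurableSpace.comap
      (fun ω => (A i ω, H i ω, L i ω)) inferInstance] fun ω => (H i ω, L i ω) :=
    measurable_snd.comp htriple_i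
  have hLmi : Measurable[MeasurableSpace.comap
      (fun ω => (A i ω, H i ω, L i ω)) inferInstance] (L i) :=
    measurable_snd.comp hpairmi
  -- basic cylinder computation
  have h_basic : ∀ s ∈ C, ∫ x in s, π (L i x) ∂μ = ∫ x in s, A i x ∂μ := by
    rintro s ⟨t, ht, rfl⟩
    set P : Fin n → Set Ω := fun j => (fun ω => (H j ω, L j ω)) ⁻¹' t j with hPdef
    have hPm : ∀ j, MeasurableSet (P j) := fun j => hpairj j (ht j)
    set Q : Set Ω := ⋂ j, ⋂ (_ : j ≠ i), P j with hQdef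
    have hQm : MeasurableSet Q :=
      MeasurableSet.iInter fun j => MeasurableSet.iInter fun _ => hPm j
    have hsm : MeasurableSet (⋂ j, (fun ω => (H j ω, L j ω)) ⁻¹' t j) :=
      MeasurableSet.iInter fun j => hPm j
    have hsplit : (⋂ j, (fun ω => (H j ω, L j ω)) ⁻¹' t j) = P i ∩ Q := by
      ext ω
      simp only [Set.mem_iInter, Set.mem_inter_iff, hQdef, hPdef]
      exact ⟨fun h => ⟨h i, fun j _ => h j⟩, fun h j => by
        rcases eq_or_ne j i with rfl | hj
        · exact h.1
        · exact h.2 j hj⟩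
    set χP : Ω → ℝ := (P i).indicator fun _ => (1:ℝ) with hχPdef
    set χQ : Ω → ℝ := Q.indicator fun _ => (1:ℝ) with hχQdef
    have key : ∀ f : Ω → ℝ, ∫ x in (⋂ j, (fun ω => (H j ω, L j ω)) ⁻¹' t j), f x ∂μ
        = ∫ x, (f x * χP x) * χQ x ∂μ := by
      intro f
      have hind : (⋂ j, (fun ω => (H j ω, L j ω)) ⁻¹' t j).indicator f
          = fun ω => (f ω * χP ω) * χQ ω := by
        funext ω
        rw [hsplit]
        by_cases h1 : ω ∈ P i <;> by_cases h2 : ω ∈ Q <;>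
          simp [hχPdef, hχQdef, Set.indicator_apply, h1, h2]
      rw [← integral_indicator hsm, hind]
    -- measurability of pieces
    have hPimi : MeasurableSet[MeasurableSpace.comap
        (fun ω => (A i ω, H i ω, L i ω)) inferInstance] (P i) := hpairmi (ht i)
    have hχPmi : Measurable[MeasurableSpace.comap
        (fun ω => (A i ω, H i ω, L i ω)) inferInstance] χP :=
      measurable_const.indicator hPimi
    have hF1 : Measurable[MeasurableSpace.comap
        (fun ω => (A i ω, H i ω, L i ω)) inferInstance] fun ω => A i ω * χP ω :=
      hAmi.mul hχPmi
    have hF2 : Measurable[MeasurableSpace.comap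
        (fun ω => (A i ω, H i ω, L i ω)) inferInstance] fun ω => π (L i ω) * χP ω :=
      (hπ.comp hLmi).mul hχPmi
    have hQM : MeasurableSet[⨆ j ∈ ({i}ᶜ : Set (Fin n)),
        MeasurableSpace.comap (fun ω => (A j ω, H j ω, L j ω)) inferInstance] Q := by
      refine MeasurableSet.iInter fun j => MeasurableSet.iInter fun hj => ?_
      have h1 : MeasurableSet[MeasurableSpace.comap
          (fun ω => (A j ω, H j ω, L j ω)) inferInstance] (P j) :=
        (measurable_snd.comp (measurable_iff_comap_le.2 le_rfl :
          Measurable[MeasurableSpace.comap (fun ω => (A j ω, H j ω, L j ω)) inferInstance]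
          fun ω => (A j ω, H j ω, L j ω))) (ht j)
      have hmem : j ∈ ({i}ᶜ : Set (Fin n)) := by simpa using hj
      have hle := le_biSup (fun j => MeasurableSpace.comap
        (fun ω => (A j ω, H j ω, L j ω)) inferInstance) hmem
      exact hle _ h1
    have hχQM : Measurable[⨆ j ∈ ({i}ᶜ : Set (Fin n)),
        MeasurableSpace.comap (fun ω => (A j ω, H j ω, L j ω)) inferInstance] χQ :=
      measurable_const.indicator hQM
    -- independence of the products
    have hFG1 : IndepFun (fun ω => A i ω * χP ω) χQ μ :=
      indep_of_indep_of_le_right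
        (indep_of_indep_of_le_left hbi (measurable_iff_comap_le.1 hF1))
        (measurable_iff_comap_le.1 hχQM)
    have hFG2 : IndepFun (fun ω => π (L i ω) * χP ω) χQ μ :=
      indep_of_indep_of_le_right
        (indep_of_indep_of_le_left hbi (measurable_iff_comap_le.1 hF2))
        (measurable_iff_comap_le.1 hχQM)
    -- integrability of the pieces
    have hχPbd : ∀ ω, |χP ω| ≤ 1 := fun ω => by
      by_cases h : ω ∈ P i <;> simp [hχPdef, Set.indicator_apply, h]
    have hχQint : Integrable χQ μ := (integrable_const (1:ℝ)).indicator hQm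
    have hF1int : Integrable (fun ω => A i ω * χP ω) μ := by
      refine integrable_of_bdd ((hA i).mul
        (measurable_const.indicator (hPm i))).aestronglyMeasurable (C := 1) fun ω => ?_
      rw [abs_mul]
      simpa using mul_le_mul (hAbd ω) (hχPbd ω) (abs_nonneg _) zero_le_one
    have hF2int : Integrable (fun ω => π (L i ω) * χP ω) μ := by
      refine integrable_of_bdd ((hπ.comp (hL i)).mul
        (measurable_const.indicator (hPm i))).aestronglyMeasurable (C := |Cπ|) fun ω => ?_
      rw [abs_mul]
      calc |π (L i ω)| * |χP ω| ≤ |Cπ| * 1 :=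
            mul_le_mul ((hπbdd _).trans (le_abs_self _)) (hχPbd ω) (abs_nonneg _) (abs_nonneg _)
        _ = |Cπ| := mul_one _
    -- factorization
    have h1 : ∫ x, (A i x * χP x) * χQ x ∂μ
        = (∫ x, A i x * χP x ∂μ) * ∫ x, χQ x ∂μ :=
      hFG1.integral_fun_mul_eq_mul_integral hF1int.aestronglyMeasurable
          hχQint.aestronglyMeasurable
    have h2 : ∫ x, (π (L i x) * χP x) * χQ x ∂μ
        = (∫ x, π (L i x) * χP x ∂μ) * ∫ x, χQ x ∂μ :=
      hFG2.integral_fun_mul_eq_mul_integral hF2int.aestronglyMeasurable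
          hχQint.aestronglyMeasurable
    -- the middle integrals agree by step 1
    have hPiHL : MeasurableSet[MeasurableSpace.comap
        (fun ω => (H i ω, L i ω)) inferInstance] (P i) := ⟨t i, ht i, rfl⟩
    have hint_eq : ∫ x in P i, A i x ∂μ = ∫ x in P i, π (L i x) ∂μ := by
      rw [← setIntegral_condExp (hpairj i).comap_le hAint hPiHL]
      exact setIntegral_congr_ae (hPm i) (hstep1.mono fun x hx _ => hx)
    have hAχ : (fun ω => A i ω * χP ω) = (P i).indicator (A i) := by
      funext ω; by_cases h : ω ∈ P i <;> simp [hχPdef, Set.indicator_apply, h]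
    have hπχ : (fun ω => π (L i ω) * χP ω) = (P i).indicator fun ω => π (L i ω) := by
      funext ω; by_cases h : ω ∈ P i <;> simp [hχPdef, Set.indicator_apply, h]
    have hmid : ∫ x, π (L i x) * χP x ∂μ = ∫ x, A i x * χP x ∂μ := by
      rw [show (fun x => π (L i x) * χP x) = (P i).indicator fun ω => π (L i ω) from hπχ,
        show (fun x => A i x * χP x) = (P i).indicator (A i) from hAχ,
        integral_indicator (hPm i), integral_indicator (hPm i)]
      exact hint_eq.symm
    rw [key, key, h1, h2, hmid]
  -- total integrals agree
  have h_univ : ∫ x, π (L i x) ∂μ = ∫ x, A i x ∂μ := by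
    calc ∫ x, π (L i x) ∂μ
        = ∫ x, (μ[A i | MeasurableSpace.comap (L i) inferInstance]) x ∂μ :=
          (integral_congr_ae (hps i)).symm
      _ = ∫ x, A i x ∂μ := integral_condExp (hL i).comap_le
  refine (ae_eq_condExp_of_forall_setIntegral_eq hm𝒢 hAint
    (fun s _ _ => hπLint.integrableOn) (fun s hs _ => ?_) ?_).symm
  · exact setIntegral_eq_on_generateFrom hpiC hm𝒢 hgen hπLint hAint h_univ h_basic s hs
  · exact ((hπ.comp hL𝒢).stronglyMeasurable).aestronglyMeasurable
end

section
/- Let 𝒢 be a sub-σ-algebra of F and C ≥ 0. For i ∈ Fin n, let ξᵢ : Ω → ℝ be square-integrable and Wᵢ : Ω → ℝ be bounded and 𝒢-measurable. If μ[ξᵢ·ξⱼ | 𝒢] = 0 almost everywhere for all i ≠ j, and μ[ξᵢ² | 𝒢] ≤ C almost everywhere for all i, then the second moment of the weighted sum satisfies ∫ (∑_{i} Wᵢ·ξᵢ)² dμ ≤ C·∑_{i} ∫ Wᵢ² dμ. -/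
open MeasureTheory

lemma integrable_mul_of_L2 {Ω : Type*} {F : MeasurableSpace Ω} {μ : Measure Ω}
    {f g : Ω → ℝ} (hf : MemLp f 2 μ) (hg : MemLp g 2 μ) :
    Integrable (fun ω => f ω * g ω) μ := by
  have h : Integrable (fun ω => (f ω ^ 2 + g ω ^ 2) / 2) μ :=
    (hf.integrable_sq.add hg.integrable_sq).div_const 2
  refine h.mono' (hf.aestronglyMeasurable.mul hg.aestronglyMeasurable) ?_
  refine ae_of_all _ fun ω => ?_
  rw [Real.norm_eq_abs, abs_mul]
  nlinarith [abs_nonneg (f ω), abs_nonneg (g ω), sq_abs (f ω), sq_abs (g ω),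
    sq_nonneg (|f ω| - |g ω|)]

lemma integral_mul_eq_integral_mul_condexp {Ω : Type*} {F : MeasurableSpace Ω}
    (μ : Measure Ω) [IsProbabilityMeasure μ]
    (𝒢 : MeasurableSpace Ω) (h𝒢 : 𝒢 ≤ F) {V g : Ω → ℝ}
    (hV : Measurable[𝒢] V) (c : ℝ) (hVb : ∀ ω, |V ω| ≤ c)
    (hg : Integrable g μ) :
    ∫ ω, V ω * g ω ∂μ = ∫ ω, V ω * (μ[g | 𝒢]) ω ∂μ := by
  have hVb' : ∀ᵐ ω ∂μ, ‖V ω‖ ≤ c := ae_of_all _ fun ω => by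
    simpa [Real.norm_eq_abs] using hVb ω
  have h1 : μ[(fun ω => V ω * g ω) | 𝒢] =ᵐ[μ] fun ω => V ω * (μ[g | 𝒢]) ω := by
    have := condExp_stronglyMeasurable_mul_of_bound h𝒢
      (hV.stronglyMeasurable) hg c hVb'
    filter_upwards [this] with ω hω using hω
  have hVF : AEStronglyMeasurable[F] V μ :=
    ((hV.mono h𝒢 le_rfl).stronglyMeasurable).aestronglyMeasurable
  have hint : Integrable (fun ω => V ω * g ω) μ := hg.bdd_mul hVF hVb'
  calc ∫ ω, V ω * g ω ∂μ = ∫ ω, (μ[(fun ω => V ω * g ω) | 𝒢]) ω ∂μ :=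
        (integral_condExp (f := fun ω => V ω * g ω) h𝒢).symm
    _ = ∫ ω, V ω * (μ[g | 𝒢]) ω ∂μ := integral_congr_ae h1

/-- If the `ξᵢ` are square-integrable and conditionally
uncorrelated given `𝒢` with conditional second moments bounded by `C`, and the
`Wᵢ` are bounded `𝒢`-measurable weights, then
`∫ (∑ i, Wᵢ·ξᵢ)² dμ ≤ C · ∑ i ∫ Wᵢ² dμ`. -/
theorem second_moment_weighted_sum_le
    {Ω : Type*} {F : MeasurableSpace Ω}
    (μ : Measure Ω) [IsProbabilityMeasure μ]
    (𝒢 : MeasurableSpace Ω) (h𝒢 : 𝒢 ≤ F)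
    (C : ℝ) (hC : 0 ≤ C)
    (n : ℕ) (ξ W : Fin n → Ω → ℝ)
    (hξ : ∀ i, MemLp (ξ i) 2 μ)
    (hWmeas : ∀ i, Measurable[𝒢] (W i))
    (hWbdd : ∀ i, ∃ B, ∀ ω, |W i ω| ≤ B)
    (hortho : ∀ i j, i ≠ j →
      μ[(fun ω => ξ i ω * ξ j ω) | 𝒢] =ᵐ[μ] fun _ => (0 : ℝ))
    (hmom : ∀ i, ∀ᵐ ω ∂μ, (μ[(fun ω' => (ξ i ω') ^ 2) | 𝒢]) ω ≤ C) :
    ∫ ω, (∑ i, W i ω * ξ i ω) ^ 2 ∂μ ≤ C * ∑ i, ∫ ω, (W i ω) ^ 2 ∂μ := by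
  classical
  choose B hB using hWbdd
  -- measurability of W i wrt F
  have hWF : ∀ i, AEStronglyMeasurable[F] (W i) μ := fun i =>
    (((hWmeas i).mono h𝒢 le_rfl).stronglyMeasurable).aestronglyMeasurable
  -- integrability of each term W i * W j * (ξ i * ξ j)
  have hξξ : ∀ i j, Integrable (fun ω => ξ i ω * ξ j ω) μ := fun i j =>
    integrable_mul_of_L2 (hξ i) (hξ j)
  have hWWb : ∀ i j ω, |W i ω * W j ω| ≤ B i * B j := fun i j ω => by
    rw [abs_mul]
    exact mul_le_mul (hB i ω) (hB j ω) (abs_nonneg _)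
      ((abs_nonneg _).trans (hB i ω))
  have hterm : ∀ i j, Integrable (fun ω => W i ω * W j ω * (ξ i ω * ξ j ω)) μ :=
    fun i j => (hξξ i j).bdd_mul ((hWF i).mul (hWF j))
      (ae_of_all _ fun ω => by rw [Real.norm_eq_abs]; exact hWWb i j ω)
  -- expand the square
  have hexpand : ∀ ω, (∑ i, W i ω * ξ i ω) ^ 2
      = ∑ i, ∑ j, W i ω * W j ω * (ξ i ω * ξ j ω) := by
    intro ω
    rw [sq, Finset.sum_mul_sum]
    congr 1; ext i; congr 1; ext j; ring
  have hWW : ∀ i j, Measurable[𝒢] (fun ω => W i ω * W j ω) := fun i j =>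
    (hWmeas i).mul (hWmeas j)
  -- the key identity for each term
  have hkey : ∀ i j, ∫ ω, W i ω * W j ω * (ξ i ω * ξ j ω) ∂μ
      = ∫ ω, W i ω * W j ω * (μ[(fun ω' => ξ i ω' * ξ j ω') | 𝒢]) ω ∂μ := fun i j =>
    integral_mul_eq_integral_mul_condexp μ 𝒢 h𝒢 (hWW i j) (B i * B j)
      (hWWb i j) (hξξ i j)
  -- off-diagonal terms vanish
  have hoff : ∀ i j, i ≠ j → ∫ ω, W i ω * W j ω * (ξ i ω * ξ j ω) ∂μ = 0 := by
    intro i j hij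
    rw [hkey i j]
    have : (fun ω => W i ω * W j ω * (μ[(fun ω' => ξ i ω' * ξ j ω') | 𝒢]) ω)
        =ᵐ[μ] fun _ => (0 : ℝ) := by
      filter_upwards [hortho i j hij] with ω hω
      simp [hω]
    rw [integral_congr_ae this, integral_zero]
  -- diagonal bound
  have hdiag : ∀ i, ∫ ω, W i ω * W i ω * (ξ i ω * ξ i ω) ∂μ
      ≤ C * ∫ ω, (W i ω) ^ 2 ∂μ := by
    intro i
    rw [hkey i i]
    have hsq_eq : μ[(fun ω' => ξ i ω' * ξ i ω') | 𝒢]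
        = μ[(fun ω' => (ξ i ω') ^ 2) | 𝒢] := by
      congr 1; ext ω; ring
    rw [hsq_eq]
    have hW2 : Integrable (fun ω => (W i ω) ^ 2) μ := by
      have : Integrable (fun _ : Ω => B i * B i) μ := integrable_const _
      refine this.mono' (((hWF i).mul (hWF i)).congr (ae_of_all _ fun ω => by simp only [Pi.mul_apply, sq])) ?_
      refine ae_of_all _ fun ω => ?_
      have h := hWWb i i ω
      rw [Real.norm_eq_abs]
      calc |W i ω ^ 2| = |W i ω * W i ω| := by ring_nf
        _ ≤ B i * B i := h
    -- integrand is ≤ C * W i ^2 a.e.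
    have hintL : Integrable
        (fun ω => W i ω * W i ω * (μ[(fun ω' => (ξ i ω') ^ 2) | 𝒢]) ω) μ :=
      integrable_condExp.bdd_mul ((hWF i).mul (hWF i))
        (ae_of_all _ fun ω => by rw [Real.norm_eq_abs]; exact hWWb i i ω)
    have hmono : (fun ω => W i ω * W i ω * (μ[(fun ω' => (ξ i ω') ^ 2) | 𝒢]) ω)
        ≤ᵐ[μ] fun ω => C * (W i ω) ^ 2 := by
      filter_upwards [hmom i] with ω hω
      calc W i ω * W i ω * (μ[(fun ω' => (ξ i ω') ^ 2) | 𝒢]) ω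
          = (W i ω) ^ 2 * (μ[(fun ω' => (ξ i ω') ^ 2) | 𝒢]) ω := by ring
        _ ≤ (W i ω) ^ 2 * C := mul_le_mul_of_nonneg_left hω (sq_nonneg _)
        _ = C * (W i ω) ^ 2 := by ring
    calc ∫ ω, W i ω * W i ω * (μ[(fun ω' => (ξ i ω') ^ 2) | 𝒢]) ω ∂μ
        ≤ ∫ ω, C * (W i ω) ^ 2 ∂μ :=
          integral_mono_ae hintL (hW2.const_mul C) hmono
      _ = C * ∫ ω, (W i ω) ^ 2 ∂μ := integral_const_mul C _
  -- put everything together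
  calc ∫ ω, (∑ i, W i ω * ξ i ω) ^ 2 ∂μ
      = ∫ ω, ∑ i, ∑ j, W i ω * W j ω * (ξ i ω * ξ j ω) ∂μ := by
        simp_rw [hexpand]
    _ = ∑ i, ∑ j, ∫ ω, W i ω * W j ω * (ξ i ω * ξ j ω) ∂μ := by
        rw [integral_finset_sum _ fun i _ => integrable_finset_sum _ fun j _ => hterm i j]
        exact Finset.sum_congr rfl fun i _ =>
          integral_finset_sum _ fun j _ => hterm i j
    _ = ∑ i, ∫ ω, W i ω * W i ω * (ξ i ω * ξ i ω) ∂μ := by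
        refine Finset.sum_congr rfl fun i _ => ?_
        rw [Finset.sum_eq_single i (fun j _ hji => hoff i j (Ne.symm hji))
          (fun h => absurd (Finset.mem_univ i) h)]
    _ ≤ ∑ i, C * ∫ ω, (W i ω) ^ 2 ∂μ := Finset.sum_le_sum fun i _ => hdiag i
    _ = C * ∑ i, ∫ ω, (W i ω) ^ 2 ∂μ := by rw [Finset.mul_sum]
end

section
/- Let A : Ω → ℝ be measurable taking values in {0,1}, L : Ω → E measurable, π : E → ℝ bounded measurable, ξ : Ω → ℝ square-integrable, and c₁, c₂ ≥ 0. If μ[ξ² | σ(A,L)] ≥ c₁ almost everywhere and μ[(A − π∘L)² | σ(L)] ≥ c₂ almost everywhere, then ∫ (A − π(L))²·ξ² dμ ≥ c₁·c₂ (so the variance of the doubly robust score is bounded away from zero). -/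
open MeasureTheory

/-- If `μ[ξ² | σ(A,L)] ≥ c₁` a.e. and `μ[(A − π∘L)² | σ(L)] ≥ c₂`
a.e., then `∫ (A − π(L))²·ξ² dμ ≥ c₁·c₂`: the variance of the doubly robust
score is bounded away from zero. -/
theorem dr_score_variance_lower_bound
    {Ω E : Type*} [MeasurableSpace Ω] [MeasurableSpace E]
    (μ : Measure Ω) [IsProbabilityMeasure μ]
    (L : Ω → E) (A : Ω → ℝ)
    (hL : Measurable L) (hA : Measurable A)
    (hA01 : ∀ ω, A ω = 0 ∨ A ω = 1)
    (π : E → ℝ) (hπ : Measurable π) (hπbdd : ∃ C, ∀ x, |π x| ≤ C)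
    (ξ : Ω → ℝ) (hξ : MemLp ξ 2 μ)
    (c₁ c₂ : ℝ) (hc₁ : 0 ≤ c₁) (hc₂ : 0 ≤ c₂)
    (hmom₁ : ∀ᵐ ω ∂μ,
      c₁ ≤ (μ[(fun ω' => (ξ ω') ^ 2) |
        MeasurableSpace.comap (fun ω' => (A ω', L ω')) inferInstance]) ω)
    (hmom₂ : ∀ᵐ ω ∂μ,
      c₂ ≤ (μ[(fun ω' => (A ω' - π (L ω')) ^ 2) |
        MeasurableSpace.comap L inferInstance]) ω) :
    c₁ * c₂ ≤ ∫ ω, (A ω - π (L ω)) ^ 2 * (ξ ω) ^ 2 ∂μ := by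
  obtain ⟨C, hC⟩ := hπbdd
  have hm := (hA.prodMk hL).comap_le
  have hmL := hL.comap_le
  have hf_meas : Measurable fun ω => (A ω - π (L ω)) ^ 2 :=
    ((hA.sub (hπ.comp hL)).pow_const 2)
  have hALm : Measurable[MeasurableSpace.comap (fun ω' => (A ω', L ω')) inferInstance]
      (fun ω => (A ω, L ω)) := Measurable.of_comap_le le_rfl
  have hfm : Measurable[MeasurableSpace.comap (fun ω' => (A ω', L ω')) inferInstance]
      (fun ω => (A ω - π (L ω)) ^ 2) := by
    have h : Measurable fun p : ℝ × E => (p.1 - π p.2) ^ 2 := by measurability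
    exact h.comp hALm
  set m : MeasurableSpace Ω :=
    MeasurableSpace.comap (fun ω' => (A ω', L ω')) inferInstance with hm_def
  set mL : MeasurableSpace Ω := MeasurableSpace.comap L inferInstance with hmL_def
  set f : Ω → ℝ := fun ω => (A ω - π (L ω)) ^ 2 with hf_def
  set g : Ω → ℝ := fun ω => (ξ ω) ^ 2 with hg_def
  -- f bounded
  have hf_bdd : ∀ ω, ‖f ω‖ ≤ (1 + C) ^ 2 := by
    intro ω
    have hCpos : (0:ℝ) ≤ C := le_trans (abs_nonneg _) (hC (L ω))
    have h := abs_le.mp (hC (L ω))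
    show ‖(A ω - π (L ω)) ^ 2‖ ≤ (1 + C) ^ 2
    rw [Real.norm_eq_abs, abs_of_nonneg (sq_nonneg _)]
    rcases hA01 ω with h0 | h0 <;> rw [h0] <;> nlinarith
  have hf_int : Integrable f μ := by
    refine ⟨hf_meas.aestronglyMeasurable, ?_⟩
    exact HasFiniteIntegral.of_bounded (C := (1 + C) ^ 2) (Filter.Eventually.of_forall hf_bdd)
  have hg_int : Integrable g μ := by
    have := hξ.integrable_sq
    simpa [hg_def, sq] using this
  have hfg_int : Integrable (f * g) μ :=
    hg_int.bdd_mul (c := (1 + C) ^ 2) hf_meas.aestronglyMeasurable (Filter.Eventually.of_forall hf_bdd)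
  have hf_nonneg : ∀ ω, 0 ≤ f ω := fun ω => sq_nonneg _
  -- Step 1: μ[f*g | m] = f * μ[g|m]
  have hpull : μ[f * g | m] =ᵐ[μ] f * μ[g | m] :=
    condExp_mul_of_stronglyMeasurable_left (hfm.stronglyMeasurable) hfg_int hg_int
  have h1 : ∫ ω, f ω * g ω ∂μ = ∫ ω, f ω * (μ[g | m]) ω ∂μ := by
    rw [show (∫ ω, f ω * g ω ∂μ) = ∫ ω, (f * g) ω ∂μ from rfl,
      ← integral_condExp hm (f := f * g) (μ := μ)]
    exact integral_congr_ae (hpull.mono fun ω h => by simpa using h)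
  -- f * μ[g|m] integrable (it equals condexp a.e.)
  have hfcond_int : Integrable (fun ω => f ω * (μ[g | m]) ω) μ :=
    (integrable_condExp (f := f * g) (m := m)).congr (hpull.mono fun ω h => by simpa using h)
  -- Step 2: ∫ f * μ[g|m] ≥ c₁ * ∫ f
  have h2 : c₁ * ∫ ω, f ω ∂μ ≤ ∫ ω, f ω * (μ[g | m]) ω ∂μ := by
    rw [← integral_const_mul]
    refine integral_mono_ae (hf_int.const_mul c₁) hfcond_int ?_
    filter_upwards [hmom₁] with ω hω
    have := mul_le_mul_of_nonneg_left hω (hf_nonneg ω)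
    calc c₁ * f ω = f ω * c₁ := mul_comm _ _
      _ ≤ f ω * (μ[g | m]) ω := mul_le_mul_of_nonneg_left hω (hf_nonneg ω)
  -- Step 3: ∫ f ≥ c₂
  have h3 : c₂ ≤ ∫ ω, f ω ∂μ := by
    rw [← integral_condExp hmL (f := f)]
    calc c₂ = ∫ _ω, c₂ ∂μ := by simp
      _ ≤ ∫ ω, (μ[f | mL]) ω ∂μ :=
        integral_mono_ae (integrable_const c₂) integrable_condExp hmom₂
  calc c₁ * c₂ ≤ c₁ * ∫ ω, f ω ∂μ := by nlinarith
    _ ≤ ∫ ω, f ω * (μ[g | m]) ω ∂μ := h2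
    _ = ∫ ω, f ω * g ω ∂μ := h1.symm
    _ = ∫ ω, (A ω - π (L ω)) ^ 2 * (ξ ω) ^ 2 ∂μ := rfl
end

section
/- Let ζ : E → ℝ be bounded measurable (the effect modifier Z = ζ(L)). Suppose the heterogeneous-effects model and correct propensity score hold: μ[Y | σ(A,L)] = ψ₁·A + ψ₂·A·(ζ∘L) + b∘L almost everywhere for ψ₁, ψ₂ ∈ ℝ and measurable b : E → ℝ with b∘L integrable, and μ[A | σ(L)] = π∘L almost everywhere for bounded measurable π : E → ℝ. Set H = Y − ψ₁·A − ψ₂·A·ζ(L). Then for all measurable m₁, m₂ : E → ℝ with m₁∘L and m₂∘L integrable, both components of the bivariate doubly robust score have mean zero: ∫ (A − π(L))·(H − m₁(L)) dμ = 0 and ∫ ζ(L)·(A − π(L))·(H − m₂(L)) dμ = 0. -/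
open MeasureTheory

/-- Under the heterogeneous-effects model
`μ[Y | σ(A,L)] = ψ₁·A + ψ₂·A·(ζ∘L) + b∘L` a.e. and a correct propensity score
`μ[A | σ(L)] = π∘L` a.e., both components of the bivariate doubly robust score
have mean zero, where `H = Y − ψ₁·A − ψ₂·A·ζ(L)`. -/
theorem dr_score_mean_zero_effect_modification
    {Ω E : Type*} [MeasurableSpace Ω] [MeasurableSpace E]
    (μ : Measure Ω) [IsProbabilityMeasure μ]
    (L : Ω → E) (A Y : Ω → ℝ)
    (hL : Measurable L) (hA : Measurable A)
    (hA01 : ∀ ω, A ω = 0 ∨ A ω = 1)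
    (hY : Integrable Y μ)
    (ζ : E → ℝ) (hζ : Measurable ζ) (hζbdd : ∃ C, ∀ x, |ζ x| ≤ C)
    (ψ₁ ψ₂ : ℝ) (b : E → ℝ) (hb : Measurable b)
    (hbL : Integrable (fun ω => b (L ω)) μ)
    (hmodel : μ[Y | MeasurableSpace.comap (fun ω => (A ω, L ω)) inferInstance]
      =ᵐ[μ] fun ω => ψ₁ * A ω + ψ₂ * A ω * ζ (L ω) + b (L ω))
    (π : E → ℝ) (hπ : Measurable π) (hπbdd : ∃ C, ∀ x, |π x| ≤ C)
    (hps : μ[A | MeasurableSpace.comap L inferInstance] =ᵐ[μ] fun ω => π (L ω))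
    (H : Ω → ℝ) (hH : H = fun ω => Y ω - ψ₁ * A ω - ψ₂ * A ω * ζ (L ω)) :
    ∀ m₁ m₂ : E → ℝ, Measurable m₁ → Measurable m₂ →
      Integrable (fun ω => m₁ (L ω)) μ → Integrable (fun ω => m₂ (L ω)) μ →
      (∫ ω, (A ω - π (L ω)) * (H ω - m₁ (L ω)) ∂μ = 0 ∧
       ∫ ω, ζ (L ω) * (A ω - π (L ω)) * (H ω - m₂ (L ω)) ∂μ = 0) := by
  obtain ⟨Cζ, hCζ⟩ := hζbdd
  obtain ⟨Cπ, hCπ⟩ := hπbdd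
  intro m₁ m₂ hm₁ hm₂ hm₁L hm₂L
  have hmAL0 := (hA.prodMk hL).comap_le
  have hmLle0 := hL.comap_le
  set mAL := MeasurableSpace.comap (fun ω => (A ω, L ω)) inferInstance with hmALdef
  set mL := MeasurableSpace.comap L inferInstance with hmLdef
  have hmAL := hmAL0
  have hmLle := hmLle0
  have hALm : Measurable[mAL] fun ω => (A ω, L ω) := Measurable.of_comap_le le_rfl
  have hAm : Measurable[mAL] A := measurable_fst.comp hALm
  have hLmAL : Measurable[mAL] L := measurable_snd.comp hALm
  have hLm : Measurable[mL] L := Measurable.of_comap_le le_rfl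
  have hmLAL : mL ≤ mAL := hLmAL.comap_le
  -- boundedness of A
  have hAb : ∀ ω, ‖A ω‖ ≤ 1 := fun ω => by rcases hA01 ω with h | h <;> simp [h]
  -- basic integrability
  have intA : Integrable A μ := by
    have := ((integrable_const (1 : ℝ)) : Integrable (fun _ : Ω => (1:ℝ)) μ).bdd_mul
      hA.aestronglyMeasurable (c := 1) (Filter.Eventually.of_forall hAb)
    simpa using this
  have intπL : Integrable (fun ω => π (L ω)) μ := by
    have := ((integrable_const (1 : ℝ)) : Integrable (fun _ : Ω => (1:ℝ)) μ).bdd_mul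
      (hπ.comp hL).aestronglyMeasurable (c := Cπ) (Filter.Eventually.of_forall fun ω => by simpa using hCπ (L ω))
    simpa using this
  have intθ : Integrable (fun ω => ψ₁ * A ω + ψ₂ * A ω * ζ (L ω)) μ := by
    have h1 : (fun ω => ψ₁ * A ω + ψ₂ * A ω * ζ (L ω))
        = fun ω => (ψ₁ + ψ₂ * ζ (L ω)) * A ω := by funext ω; ring
    rw [h1]
    refine intA.bdd_mul ((measurable_const.add (measurable_const.mul
      (hζ.comp hL))).aestronglyMeasurable) (c := |ψ₁| + |ψ₂| * Cζ) (Filter.Eventually.of_forall fun ω => ?_)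
    calc ‖ψ₁ + ψ₂ * ζ (L ω)‖ ≤ |ψ₁| + |ψ₂ * ζ (L ω)| := abs_add_le _ _
    _ ≤ |ψ₁| + |ψ₂| * Cζ := by
        rw [abs_mul]
        exact add_le_add le_rfl (mul_le_mul_of_nonneg_left (hCζ _) (abs_nonneg _))
  have intH : Integrable H μ := by
    rw [hH]
    have h1 : (fun ω => Y ω - ψ₁ * A ω - ψ₂ * A ω * ζ (L ω))
        = fun ω => Y ω - (ψ₁ * A ω + ψ₂ * A ω * ζ (L ω)) := by funext ω; ring
    rw [h1]; exact hY.sub intθ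
  have intAπ : Integrable (fun ω => A ω - π (L ω)) μ := intA.sub intπL
  -- conditional expectation of H given σ(A,L) is b ∘ L
  have hθm : Measurable[mAL] fun ω => ψ₁ * A ω + ψ₂ * A ω * ζ (L ω) :=
    (measurable_const.mul hAm).add ((measurable_const.mul hAm).mul (hζ.comp hLmAL))
  have hHcond : μ[H | mAL] =ᵐ[μ] fun ω => b (L ω) := by
    have h1 : H = Y - fun ω => ψ₁ * A ω + ψ₂ * A ω * ζ (L ω) := by
      rw [hH]; funext ω; simp; ring
    rw [h1]
    calc μ[Y - (fun ω => ψ₁ * A ω + ψ₂ * A ω * ζ (L ω)) | mAL]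
        =ᵐ[μ] μ[Y | mAL] - μ[(fun ω => ψ₁ * A ω + ψ₂ * A ω * ζ (L ω)) | mAL] :=
          condExp_sub hY intθ mAL
      _ =ᵐ[μ] fun ω => b (L ω) := by
          rw [condExp_of_stronglyMeasurable hmAL hθm.stronglyMeasurable intθ]
          filter_upwards [hmodel] with ω hω
          simp only [Pi.sub_apply, hω]; ring
  -- conditional expectation of A - π∘L given σ(L) is 0
  have hAπcond : μ[(fun ω => A ω - π (L ω)) | mL] =ᵐ[μ] fun _ => (0 : ℝ) := by
    calc μ[(fun ω => A ω - π (L ω)) | mL]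
        =ᵐ[μ] μ[A | mL] - μ[(fun ω => π (L ω)) | mL] := condExp_sub intA intπL mL
      _ =ᵐ[μ] fun _ => (0 : ℝ) := by
          have hπLm : Measurable[mL] (fun ω => π (L ω)) := hπ.comp hLm
          rw [condExp_of_stronglyMeasurable hmLle hπLm.stronglyMeasurable intπL]
          filter_upwards [hps] with ω hω
          simp [hω]
  -- key lemma
  have key : ∀ c : Ω → ℝ, Measurable[mL] c → (∀ ω, ‖c ω‖ ≤ max Cζ 1) →
      ∀ m : E → ℝ, Measurable m → Integrable (fun ω => m (L ω)) μ →
      ∫ ω, c ω * (A ω - π (L ω)) * (H ω - m (L ω)) ∂μ = 0 := by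
    intro c hc hcb m hm hmLint
    set f : Ω → ℝ := fun ω => c ω * (A ω - π (L ω)) with hf
    set g : Ω → ℝ := fun ω => H ω - m (L ω) with hg
    have hfSM : StronglyMeasurable[mAL] f :=
      ((hc.mono hmLAL le_rfl).mul (hAm.sub (hπ.comp hLmAL))).stronglyMeasurable
    have hfb : ∀ ω, ‖f ω‖ ≤ max Cζ 1 * (1 + Cπ) := by
      intro ω
      have h1 : ‖A ω - π (L ω)‖ ≤ 1 + Cπ :=
        (norm_sub_le _ _).trans (add_le_add (hAb ω) (hCπ (L ω)))
      calc ‖f ω‖ = ‖c ω‖ * ‖A ω - π (L ω)‖ := norm_mul _ _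
        _ ≤ max Cζ 1 * (1 + Cπ) :=
            mul_le_mul (hcb ω) h1 (norm_nonneg _)
              (le_trans (norm_nonneg _) (hcb ω))
    have intg : Integrable g μ := intH.sub hmLint
    have intfg : Integrable (fun ω => f ω * g ω) μ :=
      intg.bdd_mul (hfSM.mono hmAL).aestronglyMeasurable (Filter.Eventually.of_forall hfb)
    -- conditional expectation of g given σ(A,L)
    have hgcond : μ[g | mAL] =ᵐ[μ] fun ω => b (L ω) - m (L ω) := by
      calc μ[g | mAL] =ᵐ[μ] μ[H | mAL] - μ[(fun ω => m (L ω)) | mAL] :=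
            condExp_sub intH hmLint mAL
        _ =ᵐ[μ] fun ω => b (L ω) - m (L ω) := by
            have hmLm : Measurable[mAL] (fun ω => m (L ω)) := hm.comp hLmAL
            rw [condExp_of_stronglyMeasurable hmAL hmLm.stronglyMeasurable hmLint]
            filter_upwards [hHcond] with ω hω
            simp [hω]
    set q : Ω → ℝ := fun ω => c ω * (b (L ω) - m (L ω)) with hq
    have hqSM : StronglyMeasurable[mL] q :=
      (hc.mul ((hb.comp hLm).sub (hm.comp hLm))).stronglyMeasurable
    have intq : Integrable q μ :=
      (hbL.sub hmLint).bdd_mul (hc.mono hmLle le_rfl).aestronglyMeasurable (Filter.Eventually.of_forall hcb)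
    have intqAπ : Integrable (fun ω => q ω * (A ω - π (L ω))) μ := by
      have h := intq.bdd_mul (hA.sub (hπ.comp hL)).aestronglyMeasurable
        (c := 1 + Cπ) (Filter.Eventually.of_forall fun ω => by
          simpa using (norm_sub_le (A ω) (π (L ω))).trans
            (add_le_add (hAb ω) (hCπ (L ω))))
      exact h.congr (Filter.Eventually.of_forall fun ω => mul_comm _ _)
    calc ∫ ω, f ω * g ω ∂μ = ∫ ω, (μ[(fun ω => f ω * g ω) | mAL]) ω ∂μ :=
          (integral_condExp hmAL (f := fun ω => f ω * g ω)).symm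
      _ = ∫ ω, f ω * (b (L ω) - m (L ω)) ∂μ := by
          refine integral_congr_ae ?_
          have h1 := condExp_mul_of_stronglyMeasurable_left hfSM intfg intg
          filter_upwards [h1, hgcond] with ω h1ω h2ω
          simpa [h2ω, Pi.mul_def] using h1ω
      _ = ∫ ω, q ω * (A ω - π (L ω)) ∂μ := by
          refine integral_congr_ae (Filter.Eventually.of_forall fun ω => ?_)
          simp only [hf, hq]; ring
      _ = ∫ ω, (μ[(fun ω => q ω * (A ω - π (L ω))) | mL]) ω ∂μ :=
          (integral_condExp hmLle (f := fun ω => q ω * (A ω - π (L ω)))).symm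
      _ = 0 := by
          rw [← integral_zero Ω ℝ (μ := μ)]
          refine integral_congr_ae ?_
          have h1 := condExp_mul_of_stronglyMeasurable_left hqSM intqAπ intAπ
          filter_upwards [h1, hAπcond] with ω h1ω h2ω
          simpa [h2ω, Pi.mul_def] using h1ω
  constructor
  · have := key (fun _ => 1) measurable_const
      (fun ω => by simp) m₁ hm₁ hm₁L
    simpa using this
  · exact key (fun ω => ζ (L ω)) (hζ.comp hLm)
      (fun ω => le_max_of_le_left (by simpa using hCζ (L ω))) m₂ hm₂ hm₂L
end

section
/- Let A : Ω → ℝ be measurable taking values in {0,1,2}, and define the indicators A₁ = 1{A = 1} and A₂ = 1{A = 2}. Suppose the categorical-exposure model and correct propensity scores hold: μ[Y | σ(A,L)] = ψ₁·A₁ + ψ₂·A₂ + b∘L almost everywhere for ψ₁, ψ₂ ∈ ℝ and measurable b : E → ℝ with b∘L integrable, and μ[A₁ | σ(L)] = π₁∘L and μ[A₂ | σ(L)] = π₂∘L almost everywhere for bounded measurable π₁, π₂ : E → ℝ. Set H = Y − ψ₁·A₁ − ψ₂·A₂. Then for all measurable m₁, m₂ : E → ℝ with m₁∘L and m₂∘L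 integrable, both score components have mean zero: ∫ (A₁ − π₁(L))·(H − m₁(L)) dμ = 0 and ∫ (A₂ − π₂(L))·(H − m₂(L)) dμ = 0. -/
open MeasureTheory MeasurableSpace


lemma score_zero_aux
    {Ω E : Type*} [mΩ : MeasurableSpace Ω] [MeasurableSpace E]
    (μ : Measure Ω) [IsProbabilityMeasure μ]
    (L : Ω → E) (hL : Measurable L)
    (m2 : MeasurableSpace Ω) (hm2 : m2 ≤ mΩ)
    (hLm2 : MeasurableSpace.comap L inferInstance ≤ m2)
    (Ak : Ω → ℝ) (hAk : Measurable[m2] Ak) (hAkbdd : ∀ ω, |Ak ω| ≤ 1)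
    (H : Ω → ℝ) (hHint : Integrable H μ)
    (b : E → ℝ) (hb : Measurable b) (hbL : Integrable (fun ω => b (L ω)) μ)
    (hHcond : μ[H | m2] =ᵐ[μ] fun ω => b (L ω))
    (π : E → ℝ) (hπ : Measurable π) (hπbdd : ∃ C, ∀ x, |π x| ≤ C)
    (hps : μ[Ak | MeasurableSpace.comap L inferInstance] =ᵐ[μ] fun ω => π (L ω))
    (m : E → ℝ) (hm : Measurable m) (hmL : Integrable (fun ω => m (L ω)) μ) :
    ∫ ω, (Ak ω - π (L ω)) * (H ω - m (L ω)) ∂μ = 0 := by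
  obtain ⟨C, hC⟩ := hπbdd
  set mL : MeasurableSpace Ω := MeasurableSpace.comap L inferInstance with hmLdef
  have hmL_le : mL ≤ mΩ := hLm2.trans hm2
  have hLmL : Measurable[mL] L := Measurable.of_comap_le le_rfl
  have hπLmeas : Measurable[mL] fun ω => π (L ω) := hπ.comp hLmL
  have hmLmeas : Measurable[mL] fun ω => m (L ω) := hm.comp hLmL
  have hbLmeas : Measurable[mL] fun ω => b (L ω) := hb.comp hLmL
  have hπLint : Integrable (fun ω => π (L ω)) μ := by
    refine Integrable.mono' (integrable_const C) ((hπLmeas.mono hmL_le le_rfl).aestronglyMeasurable) ?_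
    filter_upwards with ω
    simpa [Real.norm_eq_abs] using hC (L ω)
  have hAkint : Integrable Ak μ := by
    refine Integrable.mono' (integrable_const 1) ((hAk.mono hm2 le_rfl).aestronglyMeasurable) ?_
    filter_upwards with ω
    simpa [Real.norm_eq_abs] using hAkbdd ω
  set f : Ω → ℝ := fun ω => Ak ω - π (L ω) with hfdef
  have hfm2 : StronglyMeasurable[m2] f :=
    ((hAk.sub (hπLmeas.mono hLm2 le_rfl))).stronglyMeasurable
  have hfint : Integrable f μ := hAkint.sub hπLint
  have hfbdd : ∀ ω, ‖f ω‖ ≤ 1 + C := by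
    intro ω
    calc ‖f ω‖ ≤ |Ak ω| + |π (L ω)| := abs_sub _ _
    _ ≤ 1 + C := add_le_add (hAkbdd ω) (hC (L ω))
  set g : Ω → ℝ := fun ω => H ω - m (L ω) with hgdef
  have hgint : Integrable g μ := hHint.sub hmL
  have hfgint : Integrable (f * g) μ :=
    hgint.bdd_mul ((hfm2.mono hm2).aestronglyMeasurable) (Filter.Eventually.of_forall hfbdd)
  haveI : SigmaFinite (μ.trim hm2) := isFiniteMeasure_trim hm2 |>.toSigmaFinite
  haveI : SigmaFinite (μ.trim hmL_le) := isFiniteMeasure_trim hmL_le |>.toSigmaFinite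
  have hgcond : μ[g | m2] =ᵐ[μ] fun ω => b (L ω) - m (L ω) := by
    refine (condExp_sub hHint hmL _).trans ?_
    have h2 : μ[(fun ω => m (L ω)) | m2] =ᵐ[μ] fun ω => m (L ω) := by
      rw [condExp_of_stronglyMeasurable hm2 ((hmLmeas.mono hLm2 le_rfl).stronglyMeasurable) hmL]
    filter_upwards [hHcond, h2] with ω h1 h2
    simp [h1, h2]
  have step1 : ∫ ω, f ω * g ω ∂μ = ∫ ω, f ω * (b (L ω) - m (L ω)) ∂μ := by
    have hpull : μ[f * g | m2] =ᵐ[μ] fun ω => f ω * (b (L ω) - m (L ω)) := by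
      filter_upwards [condExp_mul_of_stronglyMeasurable_left hfm2 hfgint hgint, hgcond] with ω h1 h2
      simp only [Pi.mul_apply] at h1 ⊢
      rw [h1, h2]
    calc ∫ ω, f ω * g ω ∂μ = ∫ ω, (f * g) ω ∂μ := rfl
    _ = ∫ ω, (μ[f * g | m2]) ω ∂μ := (integral_condExp hm2).symm
    _ = ∫ ω, f ω * (b (L ω) - m (L ω)) ∂μ := integral_congr_ae hpull
  set g2 : Ω → ℝ := fun ω => b (L ω) - m (L ω) with hg2def
  have hg2mL : StronglyMeasurable[mL] g2 := (hbLmeas.sub hmLmeas).stronglyMeasurable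
  have hg2int : Integrable g2 μ := hbL.sub hmL
  have hg2fint : Integrable (g2 * f) μ := by
    have h := hg2int.bdd_mul ((hfm2.mono hm2).aestronglyMeasurable) (Filter.Eventually.of_forall hfbdd)
    exact h.congr (Filter.Eventually.of_forall fun ω => mul_comm _ _)
  have hfcond : μ[f | mL] =ᵐ[μ] 0 := by
    refine (condExp_sub hAkint hπLint _).trans ?_
    have h2 : μ[(fun ω => π (L ω)) | mL] =ᵐ[μ] fun ω => π (L ω) := by
      rw [condExp_of_stronglyMeasurable hmL_le (hπLmeas.stronglyMeasurable) hπLint]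
    filter_upwards [hps, h2] with ω h1 h2
    simp only [Pi.sub_apply, Pi.zero_apply, h1, h2, sub_self]
  have step2 : ∫ ω, g2 ω * f ω ∂μ = 0 := by
    have hpull : μ[g2 * f | mL] =ᵐ[μ] (0 : Ω → ℝ) := by
      filter_upwards [condExp_mul_of_stronglyMeasurable_left hg2mL hg2fint hfint, hfcond] with ω h1 h2
      simp only [Pi.mul_apply, Pi.zero_apply] at h1 h2 ⊢
      rw [h1, h2, mul_zero]
    calc ∫ ω, g2 ω * f ω ∂μ = ∫ ω, (g2 * f) ω ∂μ := rfl
    _ = ∫ ω, (μ[g2 * f | mL]) ω ∂μ := (integral_condExp hmL_le).symm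
    _ = ∫ ω, (0 : ℝ) ∂μ := integral_congr_ae hpull
    _ = 0 := integral_zero _ _
  calc ∫ ω, (Ak ω - π (L ω)) * (H ω - m (L ω)) ∂μ = ∫ ω, f ω * g ω ∂μ := rfl
  _ = ∫ ω, f ω * (b (L ω) - m (L ω)) ∂μ := step1
  _ = ∫ ω, g2 ω * f ω ∂μ := by apply integral_congr_ae; filter_upwards with ω; ring
  _ = 0 := step2




/-- Categorical exposure with three levels. Under the model
`μ[Y | σ(A,L)] = ψ₁·A₁ + ψ₂·A₂ + b∘L` a.e. (with `A₁ = 1{A=1}`, `A₂ = 1{A=2}`)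
and correct propensity scores `μ[Aₖ | σ(L)] = πₖ∘L` a.e., both score
components have mean zero, where `H = Y − ψ₁·A₁ − ψ₂·A₂`. -/
theorem dr_score_mean_zero_categorical_exposure
    {Ω E : Type*} [MeasurableSpace Ω] [MeasurableSpace E]
    (μ : Measure Ω) [IsProbabilityMeasure μ]
    (L : Ω → E) (A Y : Ω → ℝ)
    (hL : Measurable L) (hA : Measurable A)
    (hA012 : ∀ ω, A ω = 0 ∨ A ω = 1 ∨ A ω = 2)
    (hY : Integrable Y μ)
    (A₁ A₂ : Ω → ℝ)
    (hA₁ : A₁ = fun ω => if A ω = 1 then (1 : ℝ) else 0)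
    (hA₂ : A₂ = fun ω => if A ω = 2 then (1 : ℝ) else 0)
    (ψ₁ ψ₂ : ℝ) (b : E → ℝ) (hb : Measurable b)
    (hbL : Integrable (fun ω => b (L ω)) μ)
    (hmodel : μ[Y | MeasurableSpace.comap (fun ω => (A ω, L ω)) inferInstance]
      =ᵐ[μ] fun ω => ψ₁ * A₁ ω + ψ₂ * A₂ ω + b (L ω))
    (π₁ π₂ : E → ℝ) (hπ₁ : Measurable π₁) (hπ₂ : Measurable π₂)
    (hπ₁bdd : ∃ C, ∀ x, |π₁ x| ≤ C) (hπ₂bdd : ∃ C, ∀ x, |π₂ x| ≤ C)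
    (hps₁ : μ[A₁ | MeasurableSpace.comap L inferInstance] =ᵐ[μ] fun ω => π₁ (L ω))
    (hps₂ : μ[A₂ | MeasurableSpace.comap L inferInstance] =ᵐ[μ] fun ω => π₂ (L ω))
    (H : Ω → ℝ) (hH : H = fun ω => Y ω - ψ₁ * A₁ ω - ψ₂ * A₂ ω) :
    ∀ m₁ m₂ : E → ℝ, Measurable m₁ → Measurable m₂ →
      Integrable (fun ω => m₁ (L ω)) μ → Integrable (fun ω => m₂ (L ω)) μ →
      (∫ ω, (A₁ ω - π₁ (L ω)) * (H ω - m₁ (L ω)) ∂μ = 0 ∧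
       ∫ ω, (A₂ ω - π₂ (L ω)) * (H ω - m₂ (L ω)) ∂μ = 0) := by
  rename_i iΩ iE iPM
  intro m₁ m₂ hm₁ hm₂ hm₁L hm₂L
  have hm2 := (hA.prodMk hL).comap_le
  set m2 : MeasurableSpace Ω := MeasurableSpace.comap (fun ω => (A ω, L ω)) inferInstance with hm2def
  have hLm2 : MeasurableSpace.comap L inferInstance ≤ m2 := by
    have : L = Prod.snd ∘ (fun ω => (A ω, L ω)) := rfl
    rw [this, ← MeasurableSpace.comap_comp]
    exact MeasurableSpace.comap_mono measurable_snd.comap_le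
  have hpair : Measurable[m2] fun ω => (A ω, L ω) := Measurable.of_comap_le le_rfl
  have hAm2 : Measurable[m2] A := measurable_fst.comp hpair
  have hind1 : Measurable fun r : ℝ => if r = 1 then (1 : ℝ) else 0 :=
    Measurable.ite (measurableSet_eq) measurable_const measurable_const
  have hind2 : Measurable fun r : ℝ => if r = 2 then (1 : ℝ) else 0 :=
    Measurable.ite (measurableSet_eq) measurable_const measurable_const
  have hA₁m2 : Measurable[m2] A₁ := by rw [hA₁]; exact hind1.comp hAm2
  have hA₂m2 : Measurable[m2] A₂ := by rw [hA₂]; exact hind2.comp hAm2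
  have hA₁bdd : ∀ ω, |A₁ ω| ≤ 1 := by
    intro ω; rw [hA₁]; dsimp only; split <;> norm_num
  have hA₂bdd : ∀ ω, |A₂ ω| ≤ 1 := by
    intro ω; rw [hA₂]; dsimp only; split <;> norm_num
  have hA₁int : Integrable A₁ μ := by
    refine Integrable.mono' (integrable_const 1) ((hA₁m2.mono hm2 le_rfl).aestronglyMeasurable) ?_
    filter_upwards with ω; simpa [Real.norm_eq_abs] using hA₁bdd ω
  have hA₂int : Integrable A₂ μ := by
    refine Integrable.mono' (integrable_const 1) ((hA₂m2.mono hm2 le_rfl).aestronglyMeasurable) ?_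
    filter_upwards with ω; simpa [Real.norm_eq_abs] using hA₂bdd ω
  have hHint : Integrable H μ := by
    rw [hH]
    exact (hY.sub (hA₁int.const_mul ψ₁)).sub (hA₂int.const_mul ψ₂)
  haveI : SigmaFinite (μ.trim hm2) := isFiniteMeasure_trim hm2 |>.toSigmaFinite
  have hHcond : μ[H | m2] =ᵐ[μ] fun ω => b (L ω) := by
    have hsum_int : Integrable (fun ω => ψ₁ * A₁ ω + ψ₂ * A₂ ω) μ :=
      (hA₁int.const_mul ψ₁).add (hA₂int.const_mul ψ₂)
    have hsum_sm : StronglyMeasurable[m2] fun ω => ψ₁ * A₁ ω + ψ₂ * A₂ ω :=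
      (((hA₁m2.const_mul ψ₁).add (hA₂m2.const_mul ψ₂))).stronglyMeasurable
    have hHeq : H = Y - fun ω => ψ₁ * A₁ ω + ψ₂ * A₂ ω := by
      rw [hH]; funext ω; simp; ring
    have e1 : μ[H | m2] =ᵐ[μ] μ[Y | m2] - μ[(fun ω => ψ₁ * A₁ ω + ψ₂ * A₂ ω) | m2] := by
      rw [hHeq]; exact condExp_sub hY hsum_int _
    have e2 : μ[(fun ω => ψ₁ * A₁ ω + ψ₂ * A₂ ω) | m2] =ᵐ[μ] fun ω => ψ₁ * A₁ ω + ψ₂ * A₂ ω := by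
      rw [condExp_of_stronglyMeasurable hm2 hsum_sm hsum_int]
    filter_upwards [e1, e2, hmodel] with ω h1 h2 h3
    rw [h1]
    simp only [Pi.sub_apply]
    rw [h2, h3]
    ring
  exact ⟨@score_zero_aux Ω E iΩ iE μ iPM L hL m2 hm2 hLm2 A₁ hA₁m2 hA₁bdd H hHint b hb hbL hHcond
      π₁ hπ₁ hπ₁bdd hps₁ m₁ hm₁ hm₁L,
    @score_zero_aux Ω E iΩ iE μ iPM L hL m2 hm2 hLm2 A₂ hA₂m2 hA₂bdd H hHint b hb hbL hHcond
      π₂ hπ₂ hπ₂bdd hps₂ m₂ hm₂ hm₂L⟩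
end

section
/- Let E₁, E₂ be measurable spaces, L₁ : Ω → E₁ and L₂ : Ω → E₂ measurable covariates, A₁, A₂ : Ω → ℝ measurable treatments taking values in {0,1}, Y : Ω → ℝ integrable, and ψ₁, ψ₂ ∈ ℝ. Assume: (a) μ[Y − ψ₂·A₂ | σ(A₂,A₁,L₁,L₂)] = b₂(A₁,L₁,L₂) almost everywhere for a measurable b₂ : ℝ × E₁ × E₂ → ℝ with integrable composition; (b) μ[Y − ψ₂·A₂ − ψ₁·A₁ | σ(A₁,L₁)] = b₁∘L₁ almost everywhere for a measurable b₁ : E₁ → ℝ with b₁∘L₁ integrable; (c) μ[A₂ | σ(A₁,L₁,L₂)] = π₂(A₁,L₁,L₂) almost everywhere for a bounded measurable π₂ : ℝ × E₁ × E₂ → ℝ; (d) μ[A₁ | σ(L₁)] = π₁∘L₁ almost everywhere for a bounded measurable π₁ : E₁ → ℝ. Then for every measurable m₂ : ℝ × E₁ × E₂ → ℝ and m₁ : E₁ → ℝ with integrable compositions, both components of the controlled-direct-effect score have mean zero: ∫ (A₂ − π₂(A₁,L₁,L₂))·(Y − ψ₂·A₂ − m₂(A₁,L₁,L₂)) dμ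 = 0 and ∫ (A₁ − π₁(L₁))·(Y − ψ₂·A₂ − ψ₁·A₁ − m₁(L₁)) dμ = 0. -/
open MeasureTheory

/-- If `f` is strongly measurable w.r.t. a sub-σ-algebra `m`, `f*g` and `g` are integrable,
and the conditional expectation of `g` given `m` vanishes a.e., then `∫ f*g = 0`. -/
lemma aux_int_zero {Ω : Type*} [mΩ : MeasurableSpace Ω] {μ : Measure Ω}
    {m : MeasurableSpace Ω} (hm : m ≤ mΩ) [SigmaFinite (μ.trim hm)]
    {f g : Ω → ℝ} (hf : StronglyMeasurable[m] f)
    (hfg : Integrable (fun ω => f ω * g ω) μ) (hg : Integrable g μ)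
    (h0 : μ[g|m] =ᵐ[μ] 0) : ∫ ω, f ω * g ω ∂μ = 0 := by
  have hpull : μ[(f * g : Ω → ℝ)|m] =ᵐ[μ] f * μ[g|m] :=
    condExp_mul_of_stronglyMeasurable_left hf hfg hg
  have h1 : μ[(f * g : Ω → ℝ)|m] =ᵐ[μ] 0 := by
    refine hpull.trans ?_
    filter_upwards [h0] with ω hω
    simp [hω]
  calc ∫ ω, f ω * g ω ∂μ = ∫ ω, (μ[(f * g : Ω → ℝ)|m]) ω ∂μ :=
        (integral_condExp hm (f := fun ω => f ω * g ω)).symm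
    _ = 0 := by rw [integral_congr_ae h1]; simp

/-- Generic one-step doubly-robust zero-mean lemma. -/
lemma key_step {Ω β : Type*} [mΩ : MeasurableSpace Ω] [MeasurableSpace β]
    (μ : Measure Ω) [IsProbabilityMeasure μ]
    (A : Ω → ℝ) (hA : Measurable A) (hAbdd : ∀ ω, |A ω| ≤ 1)
    (W : Ω → β) (hW : Measurable W)
    (g : Ω → ℝ) (hg : Integrable g μ)
    (b : β → ℝ) (hb : Measurable b) (hbint : Integrable (fun ω => b (W ω)) μ)
    (hmodel : μ[g | MeasurableSpace.comap (fun ω => (A ω, W ω)) inferInstance]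
      =ᵐ[μ] fun ω => b (W ω))
    (π : β → ℝ) (hπ : Measurable π) (hπbdd : ∃ C, ∀ x, |π x| ≤ C)
    (hps : μ[A | MeasurableSpace.comap W inferInstance] =ᵐ[μ] fun ω => π (W ω))
    (m : β → ℝ) (hm : Measurable m) (hmint : Integrable (fun ω => m (W ω)) μ) :
    ∫ ω, (A ω - π (W ω)) * (g ω - m (W ω)) ∂μ = 0 := by
  obtain ⟨C, hC⟩ := hπbdd
  have hGm : (MeasurableSpace.comap W inferInstance) ≤ mΩ := hW.comap_le
  have hHm : (MeasurableSpace.comap (fun ω => (A ω, W ω)) inferInstance) ≤ mΩ := (hA.prodMk hW).comap_le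
  have hWH : Measurable[(MeasurableSpace.comap (fun ω => (A ω, W ω)) inferInstance)] (fun ω => (A ω, W ω)) := measurable_iff_comap_le.mpr le_rfl
  have hWG : Measurable[(MeasurableSpace.comap W inferInstance)] W := measurable_iff_comap_le.mpr le_rfl
  -- measurability / boundedness of A - π∘W
  have hAπ_meas : Measurable (fun ω => A ω - π (W ω)) := hA.sub (hπ.comp hW)
  have hAπ_bdd : ∀ ω, ‖A ω - π (W ω)‖ ≤ 1 + C := fun ω => by
    have := abs_sub (A ω) (π (W ω))
    calc ‖A ω - π (W ω)‖ = |A ω - π (W ω)| := rfl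
      _ ≤ |A ω| + |π (W ω)| := abs_sub _ _
      _ ≤ 1 + C := add_le_add (hAbdd ω) (hC _)
  -- integrability of the two pieces
  have I1 : Integrable (fun ω => (A ω - π (W ω)) * (g ω - b (W ω))) μ :=
    (hg.sub hbint).bdd_mul hAπ_meas.aestronglyMeasurable (Filter.Eventually.of_forall hAπ_bdd)
  have I2 : Integrable (fun ω => (b (W ω) - m (W ω)) * (A ω - π (W ω))) μ := by
    have := (hbint.sub hmint).bdd_mul hAπ_meas.aestronglyMeasurable (Filter.Eventually.of_forall hAπ_bdd)
    simpa [mul_comm] using this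
  -- split the integrand
  have hsplit : ∀ ω, (A ω - π (W ω)) * (g ω - m (W ω)) =
      (A ω - π (W ω)) * (g ω - b (W ω)) + (b (W ω) - m (W ω)) * (A ω - π (W ω)) := by
    intro ω; ring
  rw [integral_congr_ae (Filter.Eventually.of_forall hsplit), integral_add I1 I2]
  -- first piece: condition on (MeasurableSpace.comap (fun ω => (A ω, W ω)) inferInstance)
  have hf1_sm : StronglyMeasurable[(MeasurableSpace.comap (fun ω => (A ω, W ω)) inferInstance)] (fun ω => A ω - π (W ω)) :=
    ((measurable_fst.sub (hπ.comp measurable_snd)).comp hWH).stronglyMeasurable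
  have hbW_sm_H : StronglyMeasurable[(MeasurableSpace.comap (fun ω => (A ω, W ω)) inferInstance)] (fun ω => b (W ω)) :=
    ((hb.comp measurable_snd).comp hWH).stronglyMeasurable
  have h0₁ : μ[(fun ω => g ω - b (W ω)) | (MeasurableSpace.comap (fun ω => (A ω, W ω)) inferInstance)] =ᵐ[μ] 0 := by
    have hsub := condExp_sub (m := (MeasurableSpace.comap (fun ω => (A ω, W ω)) inferInstance)) (μ := μ) hg hbint
    have hb_eq : μ[(fun ω => b (W ω))|(MeasurableSpace.comap (fun ω => (A ω, W ω)) inferInstance)] = fun ω => b (W ω) :=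
      condExp_of_stronglyMeasurable hHm hbW_sm_H hbint
    filter_upwards [hsub, hmodel] with ω h1 h2
    have : (μ[(fun ω => g ω - b (W ω))|(MeasurableSpace.comap (fun ω => (A ω, W ω)) inferInstance)]) ω = (μ[g|(MeasurableSpace.comap (fun ω => (A ω, W ω)) inferInstance)]) ω - (μ[(fun ω => b (W ω))|(MeasurableSpace.comap (fun ω => (A ω, W ω)) inferInstance)]) ω := h1
    simp [this, hb_eq, h2]
  have hz1 : ∫ ω, (A ω - π (W ω)) * (g ω - b (W ω)) ∂μ = 0 :=
    aux_int_zero hHm hf1_sm I1 (hg.sub hbint) h0₁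
  -- second piece: condition on (MeasurableSpace.comap W inferInstance)
  have hf2_sm : StronglyMeasurable[(MeasurableSpace.comap W inferInstance)] (fun ω => b (W ω) - m (W ω)) :=
    ((hb.comp hWG).sub (hm.comp hWG)).stronglyMeasurable
  have hAint : Integrable A μ :=
    (integrable_const (1 : ℝ)).mono' hA.aestronglyMeasurable
      (Filter.Eventually.of_forall fun ω => by simpa using hAbdd ω)
  have hπWint : Integrable (fun ω => π (W ω)) μ :=
    (integrable_const C).mono' (hπ.comp hW).aestronglyMeasurable
      (Filter.Eventually.of_forall fun ω => by simpa using hC (W ω))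
  have hπW_sm_G : StronglyMeasurable[(MeasurableSpace.comap W inferInstance)] (fun ω => π (W ω)) :=
    (hπ.comp hWG).stronglyMeasurable
  have h0₂ : μ[(fun ω => A ω - π (W ω)) | (MeasurableSpace.comap W inferInstance)] =ᵐ[μ] 0 := by
    have hsub := condExp_sub (m := (MeasurableSpace.comap W inferInstance)) (μ := μ) hAint hπWint
    have hπ_eq : μ[(fun ω => π (W ω))|(MeasurableSpace.comap W inferInstance)] = fun ω => π (W ω) :=
      condExp_of_stronglyMeasurable hGm hπW_sm_G hπWint
    filter_upwards [hsub, hps] with ω h1 h2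
    have : (μ[(fun ω => A ω - π (W ω))|(MeasurableSpace.comap W inferInstance)]) ω = (μ[A|(MeasurableSpace.comap W inferInstance)]) ω - (μ[(fun ω => π (W ω))|(MeasurableSpace.comap W inferInstance)]) ω := h1
    simp [this, hπ_eq, h2]
  have hz2 : ∫ ω, (b (W ω) - m (W ω)) * (A ω - π (W ω)) ∂μ = 0 :=
    aux_int_zero hGm hf2_sm I2 (hAint.sub hπWint) h0₂
  rw [hz1, hz2, add_zero]

/-- Controlled direct effects in the two-time-point setting.
Under the sequential outcome models (a), (b) and the sequential propensity
score models (c), (d), both components of the controlled-direct-effect doubly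
robust score have mean zero. -/
theorem dr_score_mean_zero_controlled_direct_effect
    {Ω E₁ E₂ : Type*} [MeasurableSpace Ω] [MeasurableSpace E₁] [MeasurableSpace E₂]
    (μ : Measure Ω) [IsProbabilityMeasure μ]
    (L₁ : Ω → E₁) (L₂ : Ω → E₂) (A₁ A₂ Y : Ω → ℝ)
    (hL₁ : Measurable L₁) (hL₂ : Measurable L₂)
    (hA₁ : Measurable A₁) (hA₂ : Measurable A₂)
    (hA₁01 : ∀ ω, A₁ ω = 0 ∨ A₁ ω = 1)
    (hA₂01 : ∀ ω, A₂ ω = 0 ∨ A₂ ω = 1)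
    (hY : Integrable Y μ)
    (ψ₁ ψ₂ : ℝ)
    (b₂ : ℝ × E₁ × E₂ → ℝ) (hb₂ : Measurable b₂)
    (hb₂int : Integrable (fun ω => b₂ (A₁ ω, L₁ ω, L₂ ω)) μ)
    (hmodel₂ : μ[(fun ω => Y ω - ψ₂ * A₂ ω) |
        MeasurableSpace.comap (fun ω => (A₂ ω, A₁ ω, L₁ ω, L₂ ω)) inferInstance]
      =ᵐ[μ] fun ω => b₂ (A₁ ω, L₁ ω, L₂ ω))
    (b₁ : E₁ → ℝ) (hb₁ : Measurable b₁)
    (hb₁int : Integrable (fun ω => b₁ (L₁ ω)) μ)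
    (hmodel₁ : μ[(fun ω => Y ω - ψ₂ * A₂ ω - ψ₁ * A₁ ω) |
        MeasurableSpace.comap (fun ω => (A₁ ω, L₁ ω)) inferInstance]
      =ᵐ[μ] fun ω => b₁ (L₁ ω))
    (π₂ : ℝ × E₁ × E₂ → ℝ) (hπ₂ : Measurable π₂) (hπ₂bdd : ∃ C, ∀ x, |π₂ x| ≤ C)
    (hps₂ : μ[A₂ | MeasurableSpace.comap (fun ω => (A₁ ω, L₁ ω, L₂ ω)) inferInstance]
      =ᵐ[μ] fun ω => π₂ (A₁ ω, L₁ ω, L₂ ω))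
    (π₁ : E₁ → ℝ) (hπ₁ : Measurable π₁) (hπ₁bdd : ∃ C, ∀ x, |π₁ x| ≤ C)
    (hps₁ : μ[A₁ | MeasurableSpace.comap L₁ inferInstance]
      =ᵐ[μ] fun ω => π₁ (L₁ ω)) :
    ∀ m₂ : ℝ × E₁ × E₂ → ℝ, ∀ m₁ : E₁ → ℝ, Measurable m₂ → Measurable m₁ →
      Integrable (fun ω => m₂ (A₁ ω, L₁ ω, L₂ ω)) μ →
      Integrable (fun ω => m₁ (L₁ ω)) μ →
      (∫ ω, (A₂ ω - π₂ (A₁ ω, L₁ ω, L₂ ω)) *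
          (Y ω - ψ₂ * A₂ ω - m₂ (A₁ ω, L₁ ω, L₂ ω)) ∂μ = 0 ∧
       ∫ ω, (A₁ ω - π₁ (L₁ ω)) *
          (Y ω - ψ₂ * A₂ ω - ψ₁ * A₁ ω - m₁ (L₁ ω)) ∂μ = 0) := by
  intro m₂ m₁ hm₂ hm₁ hm₂int hm₁int
  have hA₁b : ∀ ω, |A₁ ω| ≤ 1 := fun ω => by rcases hA₁01 ω with h | h <;> simp [h]
  have hA₂b : ∀ ω, |A₂ ω| ≤ 1 := fun ω => by rcases hA₂01 ω with h | h <;> simp [h]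
  have hA₂int : Integrable A₂ μ :=
    (integrable_const (1 : ℝ)).mono' hA₂.aestronglyMeasurable
      (Filter.Eventually.of_forall fun ω => by simpa using hA₂b ω)
  have hA₁int : Integrable A₁ μ :=
    (integrable_const (1 : ℝ)).mono' hA₁.aestronglyMeasurable
      (Filter.Eventually.of_forall fun ω => by simpa using hA₁b ω)
  constructor
  · exact key_step μ A₂ hA₂ hA₂b (fun ω => (A₁ ω, L₁ ω, L₂ ω))
      (hA₁.prodMk (hL₁.prodMk hL₂))
      (fun ω => Y ω - ψ₂ * A₂ ω) (hY.sub (hA₂int.const_mul ψ₂))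
      b₂ hb₂ hb₂int hmodel₂ π₂ hπ₂ hπ₂bdd hps₂ m₂ hm₂ hm₂int
  · exact key_step μ A₁ hA₁ hA₁b L₁ hL₁
      (fun ω => Y ω - ψ₂ * A₂ ω - ψ₁ * A₁ ω)
      ((hY.sub (hA₂int.const_mul ψ₂)).sub (hA₁int.const_mul ψ₁))
      b₁ hb₁ hb₁int hmodel₁ π₁ hπ₁ hπ₁bdd hps₁ m₁ hm₁ hm₁int
end

section
/- Let n, p : ℕ with 0 < n, x : Fin n → Fin p → ℝ, a : Fin n → ℝ, and λ ≥ 0. Define expit(t) = exp t / (1 + exp t) and the ℓ₁-penalised logistic objective f(γ) = (1/n)·∑_{i} [log(1 + exp(∑_{j} γ j · x i j)) − a i · (∑_{j} γ j · x i j)] + λ·∑_{j} |γ j| for γ : Fin p → ℝ. If γ̂ : Fin p → ℝ is a global minimiser of f (i.e., f(γ̂) ≤ f(γ) for all γ), then the stationarity (KKT) bound holds coordinatewise: for every j ∈ Fin p, |(1/n)·∑_{i} (a i − expit(∑_{k} γ̂ k · x i k))·x i j| ≤ λ. -/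
/-- If `S` has derivative `D` at `0` and `S 0 ≤ S t + lam * |t|` for all `t`,
then `|D| ≤ lam`. -/
lemma abs_deriv_le_of_min (S : ℝ → ℝ) (D lam : ℝ) (hd : HasDerivAt S D 0)
    (h : ∀ t, S 0 ≤ S t + lam * |t|) : |D| ≤ lam := by
  have hs : Filter.Tendsto (slope S 0) (nhdsWithin 0 {(0:ℝ)}ᶜ) (nhds D) :=
    hasDerivAt_iff_tendsto_slope.mp hd
  rw [abs_le]
  constructor
  · -- use t > 0 : slope ≥ -lam
    have hp : Filter.Tendsto (slope S 0) (nhdsWithin 0 (Set.Ioi 0)) (nhds D) :=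
      hs.mono_left (nhdsWithin_mono _ (fun t ht => ne_of_gt ht))
    refine ge_of_tendsto hp ?_
    filter_upwards [self_mem_nhdsWithin] with t (ht : (0:ℝ) < t)
    have h1 := h t
    rw [abs_of_pos ht] at h1
    have h2 : -lam * t ≤ S t - S 0 := by linarith
    rw [slope_def_field, sub_zero, le_div_iff₀ ht]
    linarith
  · -- use t < 0 : slope ≤ lam
    have hp : Filter.Tendsto (slope S 0) (nhdsWithin 0 (Set.Iio 0)) (nhds D) :=
      hs.mono_left (nhdsWithin_mono _ (fun t ht => ne_of_lt ht))
    refine le_of_tendsto hp ?_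
    filter_upwards [self_mem_nhdsWithin] with t (ht : t < (0:ℝ))
    have h1 := h t
    rw [abs_of_neg ht] at h1
    rw [slope_def_field, sub_zero, div_le_iff_of_neg ht]
    linarith

/-- KKT / stationarity bound for the ℓ₁-penalised logistic
regression estimator: at a global minimiser `γ̂` of the penalised objective,
the sup-norm of the score of the unpenalised logistic log-likelihood is at
most the penalty level `λ`. -/
theorem lasso_logistic_kkt_bound
    (n p : ℕ) (hn : 0 < n)
    (x : Fin n → Fin p → ℝ) (a : Fin n → ℝ)
    (lam : ℝ) (hlam : 0 ≤ lam)
    (f : (Fin p → ℝ) → ℝ)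
    (hf : f = fun γ => (1 / (n : ℝ)) *
        ∑ i, (Real.log (1 + Real.exp (∑ j, γ j * x i j)) - a i * ∑ j, γ j * x i j)
      + lam * ∑ j, |γ j|)
    (γhat : Fin p → ℝ) (hmin : ∀ γ, f γhat ≤ f γ) :
    ∀ j : Fin p,
      |(1 / (n : ℝ)) * ∑ i, (a i -
          Real.exp (∑ k, γhat k * x i k) / (1 + Real.exp (∑ k, γhat k * x i k))) *
        x i j| ≤ lam := by
  intro j
  set u : Fin n → ℝ := fun i => ∑ k, γhat k * x i k with hu
  set c : Fin n → ℝ := fun i => x i j with hc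
  set G : ℝ → ℝ := fun t =>
    (1 / (n : ℝ)) * ∑ i, (Real.log (1 + Real.exp (u i + t * c i)) - a i * (u i + t * c i))
    with hG
  set D : ℝ := (1 / (n : ℝ)) *
    ∑ i, ((Real.exp (u i) / (1 + Real.exp (u i))) * c i - a i * c i) with hD
  -- derivative
  have hterm : ∀ i : Fin n, HasDerivAt
      (fun t : ℝ => Real.log (1 + Real.exp (u i + t * c i)) - a i * (u i + t * c i))
      ((Real.exp (u i) / (1 + Real.exp (u i))) * c i - a i * c i) 0 := by
    intro i
    have hlin : HasDerivAt (fun t : ℝ => u i + t * c i) (c i) 0 := by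
      simpa using ((hasDerivAt_id (0:ℝ)).mul_const (c i)).const_add (u i)
    have hexp : HasDerivAt (fun t : ℝ => Real.exp (u i + t * c i)) (Real.exp (u i) * c i) 0 := by
      simpa using hlin.exp
    have h1 : HasDerivAt (fun t : ℝ => 1 + Real.exp (u i + t * c i)) (Real.exp (u i) * c i) 0 :=
      hexp.const_add 1
    have hne : (1 + Real.exp (u i + 0 * c i)) ≠ 0 := by positivity
    have hlog : HasDerivAt (fun t : ℝ => Real.log (1 + Real.exp (u i + t * c i)))
        ((Real.exp (u i) / (1 + Real.exp (u i))) * c i) 0 := by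
      have := (Real.hasDerivAt_log hne).comp 0 h1
      simp only [Function.comp_def, zero_mul, add_zero] at this
      exact this.congr_deriv (by ring)
    exact hlog.sub (hlin.const_mul (a i))
  have hdG : HasDerivAt G D 0 := by
    rw [hG, hD]
    exact (HasDerivAt.fun_sum (fun i _ => hterm i)).const_mul _
  -- update sums
  have hsum_upd : ∀ (b : ℝ) (i : Fin n),
      ∑ k, Function.update γhat j b k * x i k = u i + (b - γhat j) * c i := by
    intro b i
    have hk : ∀ k : Fin p, Function.update γhat j b k * x i k
        = γhat k * x i k + (if k = j then (b - γhat j) * x i j else 0) := by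
      intro k
      by_cases hkj : k = j
      · subst hkj; simp [Function.update_self]; ring
      · simp [Function.update_of_ne hkj, hkj]
    simp only [hk, Finset.sum_add_distrib, Finset.sum_ite_eq', Finset.mem_univ, if_true]
    rfl
  have hpen : ∀ t : ℝ, ∑ k, |Function.update γhat j (γhat j + t) k|
      ≤ (∑ k, |γhat k|) + |t| := by
    intro t
    have hk : ∀ k : Fin p, |Function.update γhat j (γhat j + t) k|
        ≤ |γhat k| + (if k = j then |t| else 0) := by
      intro k
      by_cases hkj : k = j
      · subst hkj; simp [Function.update_self]; exact abs_add_le _ _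
      · simp [Function.update_of_ne hkj, hkj]
    calc ∑ k, |Function.update γhat j (γhat j + t) k|
        ≤ ∑ k, (|γhat k| + (if k = j then |t| else 0)) := Finset.sum_le_sum (fun k _ => hk k)
      _ = (∑ k, |γhat k|) + |t| := by
          simp [Finset.sum_add_distrib, Finset.sum_ite_eq']
  -- the key minimisation inequality for G
  have hGmin : ∀ t : ℝ, G 0 ≤ G t + lam * |t| := by
    intro t
    have h0 := hmin (Function.update γhat j (γhat j + t))
    rw [hf] at h0
    simp only [hsum_upd (γhat j + t), add_sub_cancel_left] at h0
    have hG0 : G 0 = (1 / (n : ℝ)) *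
        ∑ i, (Real.log (1 + Real.exp (u i)) - a i * u i) := by
      simp [hG]
    have hpen' := hpen t
    have hpenmul : lam * ∑ k, |Function.update γhat j (γhat j + t) k|
        ≤ lam * ((∑ k, |γhat k|) + |t|) := mul_le_mul_of_nonneg_left hpen' hlam
    rw [hG0]
    have h0' : (1 / (n : ℝ)) * ∑ i, (Real.log (1 + Real.exp (u i)) - a i * u i)
        + lam * ∑ k, |γhat k|
        ≤ G t + lam * ∑ k, |Function.update γhat j (γhat j + t) k| := h0
    linarith [h0', hpenmul]
  have hDle : |D| ≤ lam := abs_deriv_le_of_min G D lam hdG hGmin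
  have heq : (1 / (n : ℝ)) * ∑ i, (a i -
      Real.exp (∑ k, γhat k * x i k) / (1 + Real.exp (∑ k, γhat k * x i k))) * x i j = -D := by
    rw [hD, ← mul_neg, ← Finset.sum_neg_distrib]
    congr 1
    apply Finset.sum_congr rfl
    intro i _
    simp only [hu, hc]
    ring
  rw [heq, abs_neg]
  exact hDle
end
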